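/- arXiv:2206.04492 — 9 statements merged into one kernel-verified Lean document; each statement's English description precedes it below -/
import Mathlib

section
/- Let d ≥ 1 and let M ∈ M_d(ℂ) be a matrix of the form M = S(A + T), where S is Hermitian and invertible, A is skew-Hermitian, and T is Hermitian positive semidefinite. Assume moreover that M(ker T) ∩ ker T = {0} and ker M ∩ ker T = {0}. Then M has no eigenvalue on the imaginary axis iℝ (in particular M is invertible). -/
open Matrix
open scoped ComplexOrder

/-!
Let `M v = μ v` with `v ≠ 0` and `μ ∈ iℝ`. Then `(A + T) v = μ S⁻¹ v`, and pairing with `v` gives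
`v*Av + v*Tv = μ · v*S⁻¹v`. Here `v*Av` and `μ · v*S⁻¹v` are purely imaginary, so the real
part says `v*Tv = 0`, i.e. `v ∈ ker T`. Then `M v = μ v` lies in both `M(ker T)` and `ker T`,
so `M v = 0`, and `v ∈ ker M ∩ ker T = {0}`.
-/

lemma LinearMap.eq_zero_of_apply_eq_smul_of_mem {R V : Type*} [Semiring R] [AddCommMonoid V]
    [Module R V] {f : V →ₗ[R] V} {p : Submodule R V} (hmap : p.map f ⊓ p = ⊥)
    (hker : LinearMap.ker f ⊓ p = ⊥) {v : V} {μ : R} (hv : f v = μ • v) (hp : v ∈ p) :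
    v = 0 := by
  have hfv : f v = 0 := by
    have : f v ∈ p.map f ⊓ p := ⟨Submodule.mem_map_of_mem hp, hv ▸ p.smul_mem μ hp⟩
    rwa [hmap, Submodule.mem_bot] at this
  have : v ∈ LinearMap.ker f ⊓ p := ⟨hfv, hp⟩
  rwa [hker, Submodule.mem_bot] at this

namespace Matrix

variable {n : Type*} [Fintype n]

lemma exists_mulVec_eq_smul_of_mem_spectrum {K : Type*} [Field K] [DecidableEq n]
    {M : Matrix n n K} {μ : K} (hμ : μ ∈ spectrum K M) : ∃ v ≠ 0, M *ᵥ v = μ • v := by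
  rw [← spectrum_toLin'] at hμ
  obtain ⟨v, hv⟩ := (Module.End.HasEigenvalue.of_mem_spectrum hμ).exists_hasEigenvector
  exact ⟨v, hv.2, by simpa using Module.End.mem_eigenspace_iff.mp hv.1⟩

lemma re_star_dotProduct_mulVec_self_of_conjTranspose_eq_neg {A : Matrix n n ℂ} (hA : Aᴴ = -A)
    (v : n → ℂ) : (star v ⬝ᵥ A *ᵥ v).re = 0 := by
  have hIA : (Complex.I • A).IsHermitian := by
    rw [IsHermitian, conjTranspose_smul, hA, Complex.star_def, Complex.conj_I, neg_smul_neg]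
  simpa [smul_mulVec, dotProduct_smul] using hIA.im_star_dotProduct_mulVec_self v

lemma PosSemidef.mulVec_eq_zero_of_mul_add_mulVec_eq_smul [DecidableEq n] {S A T : Matrix n n ℂ}
    (hT : T.PosSemidef) (hS : S.IsHermitian) (hSinv : IsUnit S) (hA : Aᴴ = -A) {v : n → ℂ}
    {μ : ℂ} (hv : (S * (A + T)) *ᵥ v = μ • v) (hμ : μ.re = 0) : T *ᵥ v = 0 := by
  have hAT : (A + T) *ᵥ v = μ • (S⁻¹ *ᵥ v) := by
    rw [← mulVec_smul, ← hv, mulVec_mulVec, ← Matrix.mul_assoc,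
      nonsing_inv_mul _ ((isUnit_iff_isUnit_det S).mp hSinv), Matrix.one_mul]
  have hquad : star v ⬝ᵥ A *ᵥ v + star v ⬝ᵥ T *ᵥ v = μ * (star v ⬝ᵥ S⁻¹ *ᵥ v) := by
    rw [← dotProduct_add, ← add_mulVec, hAT, dotProduct_smul, smul_eq_mul]
  have hw : (star v ⬝ᵥ S⁻¹ *ᵥ v).im = 0 := hS.inv.im_star_dotProduct_mulVec_self v
  have hre : (star v ⬝ᵥ T *ᵥ v).re = 0 := by
    have := congrArg Complex.re hquad
    rwa [Complex.add_re, re_star_dotProduct_mulVec_self_of_conjTranspose_eq_neg hA, zero_add,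
      Complex.mul_re, hμ, hw, zero_mul, mul_zero, sub_zero] at this
  refine (hT.dotProduct_mulVec_zero_iff v).mp (Complex.ext hre ?_)
  exact (Complex.nonneg_iff.mp (hT.dotProduct_mulVec_nonneg v)).2.symm

end Matrix

theorem stmt_0_general (d : ℕ)
    (S A T M : Matrix (Fin d) (Fin d) ℂ)
    (hS : S.IsHermitian) (hSinv : IsUnit S)
    (hA : Aᴴ = -A) (hT : T.PosSemidef)
    (hM : M = S * (A + T))
    (h1 : Submodule.map M.mulVecLin (LinearMap.ker T.mulVecLin) ⊓ LinearMap.ker T.mulVecLin = ⊥)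
    (h2 : LinearMap.ker M.mulVecLin ⊓ LinearMap.ker T.mulVecLin = ⊥) :
    IsUnit M ∧ ∀ μ ∈ spectrum ℂ M, μ.re ≠ 0 := by
  have no_imaginary_eigenvalue : ∀ μ ∈ spectrum ℂ M, μ.re ≠ 0 := by
    intro μ hμ hre
    obtain ⟨v, hv0, hv⟩ := exists_mulVec_eq_smul_of_mem_spectrum hμ
    have hTv : T *ᵥ v = 0 := hT.mulVec_eq_zero_of_mul_add_mulVec_eq_smul hS hSinv hA (hM ▸ hv) hre
    exact hv0 (LinearMap.eq_zero_of_apply_eq_smul_of_mem h1 h2 hv hTv)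
  refine ⟨?_, no_imaginary_eigenvalue⟩
  by_contra hM0
  exact no_imaginary_eigenvalue 0 ((spectrum.zero_mem_iff ℂ).mpr hM0) Complex.zero_re

/-- Let `M = S(A + T)` with `S` Hermitian invertible, `A` skew-Hermitian and
`T` Hermitian positive semidefinite, such that `M(ker T) ∩ ker T = {0}` and
`ker M ∩ ker T = {0}`. Then `M` is invertible and has no eigenvalue on the imaginary axis. -/
theorem stmt_0 (d : ℕ) (hd : 1 ≤ d)
    (S A T M : Matrix (Fin d) (Fin d) ℂ)
    (hS : S.IsHermitian) (hSinv : IsUnit S)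
    (hA : Aᴴ = -A) (hT : T.PosSemidef)
    (hM : M = S * (A + T))
    (h1 : Submodule.map M.mulVecLin (LinearMap.ker T.mulVecLin) ⊓ LinearMap.ker T.mulVecLin = ⊥)
    (h2 : LinearMap.ker M.mulVecLin ⊓ LinearMap.ker T.mulVecLin = ⊥) :
    IsUnit M ∧ ∀ μ ∈ spectrum ℂ M, μ.re ≠ 0 :=
  stmt_0_general d S A T M hS hSinv hA hT hM h1 h2
end

section
/- Let d ≥ 1, let H ∈ M_d(ℝ) be symmetric and invertible with exactly one negative eigenvalue (counted with multiplicity), and let M ∈ M_d(ℝ) be symmetric positive definite. Consider the real (2d)×(2d) block matrix Φ = [[0, −H],[I, M]]. Then Φ is invertible, Φ has no eigenvalue (over ℂ) on the imaginary axis, and Φ has exactly one eigenvalue, counted with algebraic multiplicity, in the half-plane {Re z < 0}; moreover this eigenvalue is real and negative. -/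
/-!
The characteristic polynomial of `Φ` is `q(λ) = det (λ² - λ M + H)`. If `(z² - z M + H) v = 0`
with `v ≠ 0`, the imaginary part of `v* (z² - z M + H) v = 0` is
`Im z · (2 Re z · |v|² - v* M v) = 0`, so every eigenvalue with `Re z ≤ 0` is real, and it is
nonzero because `H` is invertible.

For real `x < 0` the matrix `Q(x) = x² - x M + H` dominates `H`, which is positive definite on the
hyperplane orthogonal to its negative eigenvector; hence `Q(x)` has at most one nonpositive
eigenvalue. At a negative root `x` of `q`, `Q(x)` is therefore positive semidefinite with a
one-dimensional kernel spanned by some `v`. So `Q(y) = Q(x) + (Q(y) - Q(x))` is positive definite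
for `y < x` (the negative root is unique), and Jacobi's formula gives
`q'(x) = (product of the nonzero eigenvalues of Q(x)) · vᵀ (2x - M) v < 0` (the root is simple).
A negative root exists because `q(0) = det H < 0` while `q` is monic of even degree.
-/

open Matrix Polynomial Filter
open scoped ComplexOrder

theorem Polynomial.Monic.eventually_atBot_eval_pos {p : ℝ[X]} (hp : p.Monic)
    (he : Even p.natDegree) : ∀ᶠ x in atBot, 0 < p.eval x := by
  rcases eq_or_ne p.natDegree 0 with h0 | h0
  · rw [hp.natDegree_eq_zero.mp h0]
    simp
  have hlead : (p.comp (-X)).leadingCoeff = 1 := by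
    rw [leadingCoeff_comp (by simp), hp.leadingCoeff, leadingCoeff_neg, leadingCoeff_X,
      he.neg_one_pow, one_mul]
  have hdeg : 0 < (p.comp (-X)).degree := by
    rw [degree_eq_natDegree (by simp [← leadingCoeff_eq_zero, hlead]), natDegree_comp]
    simp [Nat.pos_of_ne_zero h0]
  have h := (tendsto_atTop_of_leadingCoeff_nonneg _ hdeg (hlead ▸ zero_le_one)).comp
    tendsto_neg_atBot_atTop
  simpa [Function.comp_def, eval_comp] using h.eventually_gt_atTop 0

namespace OrthonormalBasis

variable {n : Type*} [Fintype n] (b : OrthonormalBasis n ℝ (EuclideanSpace ℝ n))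

theorem sum_dotProduct_smul (x : n → ℝ) : ∑ i, (⇑(b i) ⬝ᵥ x) • ⇑(b i) = x := by
  simpa [EuclideanSpace.inner_eq_star_dotProduct, dotProduct_comm] using
    congrArg WithLp.ofLp (b.sum_repr' (WithLp.toLp 2 x))

theorem dotProduct_eq_ite [DecidableEq n] (i j : n) :
    ⇑(b i) ⬝ᵥ ⇑(b j) = if i = j then 1 else 0 := by
  simpa [EuclideanSpace.inner_eq_star_dotProduct, dotProduct_comm] using
    orthonormal_iff_ite.mp b.orthonormal i j

end OrthonormalBasis

namespace Matrix

section Adjugate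

variable {n R : Type*} [Fintype n] [DecidableEq n] [CommRing R]

theorem derivative_det_smul_one (N : Matrix n n R[X]) :
    derivative N.det • (1 : Matrix n n R[X]) =
      N.map derivative * N.adjugate + N * N.adjugate.map derivative := by
  refine Matrix.ext fun i j => ?_
  have h := congrArg (fun A : Matrix n n R[X] => derivative (A i j)) (mul_adjugate N)
  simp only [mul_apply, derivative_sum, derivative_mul, Finset.sum_add_distrib, smul_apply,
    smul_eq_mul, one_apply, apply_ite derivative, derivative_one, derivative_zero, ite_self,
    mul_zero, add_zero] at h
  simp [mul_apply, one_apply, h]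

theorem eval_derivative_det_mul_dotProduct (N : Matrix n n R[X]) (x : R) {v : n → R}
    (hv : v ᵥ* N.map (eval x) = 0) (w : n → R) :
    (derivative N.det).eval x * (v ⬝ᵥ w) =
      v ⬝ᵥ (N.map (fun p => (derivative p).eval x) *ᵥ (N.map (eval x)).adjugate *ᵥ w) := by
  have h := congrArg (fun A => v ⬝ᵥ ((evalRingHom x).mapMatrix A *ᵥ w))
    (derivative_det_smul_one N)
  simp only [map_add, map_mul, RingHom.map_adjugate] at h
  simp only [RingHom.mapMatrix_apply, coe_evalRingHom, map_map, add_mulVec, ← mulVec_mulVec,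
    dotProduct_add, dotProduct_mulVec _ (N.map (eval x)), hv, zero_dotProduct, add_zero] at h
  refine Eq.trans ?_ h
  rw [smul_one_eq_diagonal, diagonal_map eval_zero, ← smul_one_eq_diagonal, smul_mulVec,
    one_mulVec, dotProduct_smul, smul_eq_mul]

theorem adjugate_unitary_mul_mul_star [StarRing R] (U : unitary (Matrix n n R))
    (X : Matrix n n R) :
    adjugate ((U : Matrix n n R) * X * star (U : Matrix n n R)) =
      U * adjugate X * star (U : Matrix n n R) := by
  have hadj (V : unitary (Matrix n n R)) :
      adjugate (V : Matrix n n R) = det (V : Matrix n n R) • star (V : Matrix n n R) :=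
    calc adjugate (V : Matrix n n R)
        _ = star (V : Matrix n n R) * (V * adjugate (V : Matrix n n R)) := by
          rw [← Matrix.mul_assoc, Unitary.coe_star_mul_self, Matrix.one_mul]
        _ = _ := by rw [mul_adjugate, Matrix.mul_smul, Matrix.mul_one]
  have hdet : det (U : Matrix n n R) * det (star (U : Matrix n n R)) = 1 := by
    rw [← det_mul, Unitary.mul_star_self_of_mem U.prop, det_one]
  rw [adjugate_mul_distrib, adjugate_mul_distrib, hadj U, ← Unitary.coe_star, hadj (star U)]
  simp only [Unitary.coe_star, star_star, Matrix.mul_smul, Matrix.smul_mul, smul_smul, hdet,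
    one_smul, Matrix.mul_assoc]

end Adjugate

section Hermitian

variable {n : Type*} [Fintype n] [DecidableEq n]

theorem IsHermitian.adjugate_mulVec_eigenvectorBasis {𝕜 : Type*} [RCLike 𝕜] {A : Matrix n n 𝕜}
    (hA : A.IsHermitian) (k : n) :
    A.adjugate *ᵥ ⇑(hA.eigenvectorBasis k) =
      (∏ j ∈ Finset.univ.erase k, (hA.eigenvalues j : 𝕜)) • ⇑(hA.eigenvectorBasis k) := by
  have hA' : A.adjugate = (hA.eigenvectorUnitary : Matrix n n 𝕜) *
      Matrix.adjugate (diagonal (RCLike.ofReal ∘ hA.eigenvalues)) *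
        star (hA.eigenvectorUnitary : Matrix n n 𝕜) := by
    conv_lhs => rw [hA.spectral_theorem, Unitary.conjStarAlgAut_apply]
    exact adjugate_unitary_mul_mul_star _ _
  rw [hA', ← mulVec_mulVec, ← mulVec_mulVec, star_eigenvectorUnitary_mulVec, adjugate_diagonal,
    diagonal_mulVec_single, ← smul_eq_mul, Pi.single_smul', mulVec_smul,
    eigenvectorUnitary_mulVec]
  rfl

theorem IsHermitian.dotProduct_mulVec_eq_sum {A : Matrix n n ℝ} (hA : A.IsHermitian)
    (x : n → ℝ) :
    x ⬝ᵥ A *ᵥ x = ∑ i, hA.eigenvalues i * (⇑(hA.eigenvectorBasis i) ⬝ᵥ x) ^ 2 := by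
  nth_rewrite 2 [← hA.eigenvectorBasis.sum_dotProduct_smul x]
  rw [mulVec_sum, dotProduct_sum]
  refine Finset.sum_congr rfl fun i _ => ?_
  rw [mulVec_smul, hA.mulVec_eigenvectorBasis, dotProduct_smul, dotProduct_smul,
    dotProduct_comm x, smul_eq_mul, smul_eq_mul]
  ring

theorem IsHermitian.dotProduct_mulVec_pos_of_dotProduct_eigenvector_eq_zero
    {A : Matrix n n ℝ} (hA : A.IsHermitian) {i₀ : n} (hpos : ∀ i ≠ i₀, 0 < hA.eigenvalues i)
    {x : n → ℝ} (hx : x ≠ 0) (hx₀ : ⇑(hA.eigenvectorBasis i₀) ⬝ᵥ x = 0) :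
    0 < x ⬝ᵥ A *ᵥ x := by
  obtain ⟨i, hi⟩ : ∃ i, ⇑(hA.eigenvectorBasis i) ⬝ᵥ x ≠ 0 := by
    by_contra! h
    exact hx (by simpa [h] using (hA.eigenvectorBasis.sum_dotProduct_smul x).symm)
  have hii₀ : i ≠ i₀ := by
    rintro rfl
    exact hi hx₀
  rw [hA.dotProduct_mulVec_eq_sum]
  refine Finset.sum_pos' (fun j _ => ?_)
    ⟨i, Finset.mem_univ _, by have := hpos i hii₀; positivity⟩
  rcases eq_or_ne j i₀ with rfl | hj
  · simp [hx₀]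
  · exact mul_nonneg (hpos j hj).le (sq_nonneg _)

theorem IsHermitian.eigenvalues_pos_of_posSemidef_sub {A B : Matrix n n ℝ} (hA : A.IsHermitian)
    (hB : B.IsHermitian) (hAB : (B - A).PosSemidef) {i₀ : n}
    (hA₀ : ∀ i ≠ i₀, 0 < hA.eigenvalues i) {k : n} (hk : hB.eigenvalues k ≤ 0) {j : n}
    (hjk : j ≠ k) : 0 < hB.eigenvalues j := by
  by_contra! hj
  have orth := hB.eigenvectorBasis.dotProduct_eq_ite
  have huu := orth k k
  have hww := orth j j
  have huw := orth k j
  have hwu := orth j k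
  have hBu := hB.mulVec_eigenvectorBasis k
  have hBw := hB.mulVec_eigenvectorBasis j
  simp only [if_pos, if_neg hjk, if_neg hjk.symm] at huu hww huw hwu
  set e := ⇑(hA.eigenvectorBasis i₀)
  set u := ⇑(hB.eigenvectorBasis k)
  set w := ⇑(hB.eigenvectorBasis j)
  clear_value u w
  -- the plane spanned by `u` and `w`, on which `B ≤ 0`, meets the hyperplane `e⊥`, on which `A > 0`
  obtain ⟨c, d, hcd, he⟩ : ∃ c d : ℝ, (c ≠ 0 ∨ d ≠ 0) ∧ c * (e ⬝ᵥ u) + d * (e ⬝ᵥ w) = 0 := by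
    by_cases hu : e ⬝ᵥ u = 0
    · exact ⟨1, 0, Or.inl one_ne_zero, by simp [hu]⟩
    · exact ⟨e ⬝ᵥ w, -(e ⬝ᵥ u), Or.inr (neg_ne_zero.mpr hu), by ring⟩
  have hy : c • u + d • w ≠ 0 := by
    intro h0
    have hu := congrArg (u ⬝ᵥ ·) h0
    have hw := congrArg (w ⬝ᵥ ·) h0
    simp only [dotProduct_add, dotProduct_smul, huu, huw, hwu, hww, smul_eq_mul] at hu hw
    simp_all
  have hyA := hA.dotProduct_mulVec_pos_of_dotProduct_eigenvector_eq_zero hA₀ hy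
    (by simpa [dotProduct_add, dotProduct_smul] using he)
  have hyBA := hAB.dotProduct_mulVec_nonneg (c • u + d • w)
  rw [star_trivial, sub_mulVec, dotProduct_sub] at hyBA
  have hyB : (c • u + d • w) ⬝ᵥ B *ᵥ (c • u + d • w) =
      c ^ 2 * hB.eigenvalues k + d ^ 2 * hB.eigenvalues j := by
    simp only [mulVec_add, mulVec_smul, hBu, hBw, dotProduct_add, add_dotProduct, dotProduct_smul,
      smul_dotProduct, huu, huw, hwu, hww, smul_eq_mul]
    ring
  nlinarith [mul_nonpos_of_nonneg_of_nonpos (sq_nonneg c) hk,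
    mul_nonpos_of_nonneg_of_nonpos (sq_nonneg d) hj]

theorem IsHermitian.exists_eigenvalues_of_card_filter_neg_eq_one {H : Matrix n n ℝ}
    (hH : H.IsHermitian) (hunit : IsUnit H)
    (hcard : (Finset.univ.filter fun i => hH.eigenvalues i < 0).card = 1) :
    ∃ i₀, hH.eigenvalues i₀ < 0 ∧ ∀ i ≠ i₀, 0 < hH.eigenvalues i := by
  obtain ⟨i₀, hi₀⟩ := Finset.card_eq_one.mp hcard
  refine ⟨i₀, by simpa using hi₀.ge (Finset.mem_singleton_self i₀), fun i hi => ?_⟩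
  have hne : hH.eigenvalues i ≠ 0 := fun h0 =>
    ((isUnit_iff_isUnit_det H).mp hunit).ne_zero
      (by simpa [hH.det_eq_prod_eigenvalues] using Finset.prod_eq_zero (Finset.mem_univ i) h0)
  have hnotneg : ¬hH.eigenvalues i < 0 := fun h =>
    hi (Finset.mem_singleton.mp (hi₀ ▸ Finset.mem_filter.mpr ⟨Finset.mem_univ i, h⟩))
  exact lt_of_le_of_ne (not_lt.mp hnotneg) hne.symm

theorem PosDef.map_ofReal {M : Matrix n n ℝ} (hM : M.PosDef) :
    (M.map ((↑) : ℝ → ℂ)).PosDef := by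
  have hMℂ : (M.map ((↑) : ℝ → ℂ)).IsHermitian := hM.1.map _ fun _ => by simp
  rw [hMℂ.posDef_iff_eigenvalues_pos]
  intro i
  have hroot : (hMℂ.eigenvalues i : ℂ) ∈ (M.map ((↑) : ℝ → ℂ)).charpoly.roots := by
    rw [hMℂ.roots_charpoly_eq_eigenvalues]
    simp
  have hcp : (M.map ((↑) : ℝ → ℂ)).charpoly = M.charpoly.map (algebraMap ℝ ℂ) :=
    charpoly_map M (algebraMap ℝ ℂ)
  rw [hcp, hM.1.charpoly_eq, Polynomial.map_prod] at hroot
  simp only [Polynomial.map_sub, map_X, map_C] at hroot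
  obtain ⟨j, -, hj⟩ := Finset.prod_eq_zero_iff.mp
    (by simpa [eval_prod] using isRoot_of_mem_roots hroot)
  rw [sub_eq_zero, Complex.ofReal_inj] at hj
  exact hj ▸ hM.eigenvalues_pos j

end Hermitian

section QuadPencil

variable {n R : Type*} [DecidableEq n] [CommRing R]

noncomputable def quadPencil (M H : Matrix n n R) : Matrix n n R[X] :=
  (X ^ 2 : R[X]) • 1 - (X : R[X]) • M.map C + H.map C

theorem quadPencil_map_eval (M H : Matrix n n R) (x : R) :
    (quadPencil M H).map (eval x) = x ^ 2 • 1 - x • M + H := by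
  ext i j
  by_cases h : i = j <;> simp [quadPencil, h] <;> ring

theorem quadPencil_map_derivative_eval (M H : Matrix n n R) (x : R) :
    (quadPencil M H).map (fun p => (derivative p).eval x) = (2 * x) • 1 - M := by
  ext i j
  by_cases h : i = j <;> simp [quadPencil, h, one_add_one_eq_two]

variable [Fintype n]

theorem eval_det_quadPencil (M H : Matrix n n R) (x : R) :
    (quadPencil M H).det.eval x = det (x ^ 2 • 1 - x • M + H) := by
  rw [← quadPencil_map_eval, ← coe_evalRingHom, RingHom.map_det]
  rfl

theorem charpoly_fromBlocks_zero_neg_one [Nontrivial R] (M H : Matrix n n R) :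
    (fromBlocks 0 (-H) 1 M).charpoly = (quadPencil M H).det := by
  have hfactor : charmatrix (fromBlocks 0 (-H) 1 M) * fromBlocks (charmatrix M) 0 1 1 =
      fromBlocks (quadPencil M H) (H.map C) 0 (charmatrix M) := by
    rw [charmatrix_fromBlocks, fromBlocks_multiply, charmatrix_zero]
    congr 1 <;> simp [quadPencil, charmatrix, smul_eq_diagonal_mul, sq, mul_sub, Matrix.map_neg]
  have hdet := congrArg det hfactor
  rw [det_mul, det_fromBlocks_zero₂₁, det_fromBlocks_zero₁₂, det_one, mul_one] at hdet
  exact (charpoly_monic M).isRegular.right hdet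

theorem det_fromBlocks_zero_neg_one [Nontrivial R] (M H : Matrix n n R) :
    (fromBlocks 0 (-H) 1 M).det = H.det := by
  rw [det_eq_sign_charpoly_coeff, coeff_zero_eq_eval_zero, charpoly_fromBlocks_zero_neg_one,
    eval_det_quadPencil, Fintype.card_sum, Even.neg_one_pow ⟨_, rfl⟩]
  simp

end QuadPencil

section ComplexRoots

variable {n : Type*} [Fintype n] [DecidableEq n]

theorem im_eq_zero_of_det_eq_zero {M H : Matrix n n ℂ} (hM : M.PosDef) (hH : H.IsHermitian)
    {z : ℂ} (hz : det (z ^ 2 • 1 - z • M + H) = 0) (hre : z.re ≤ 0) : z.im = 0 := by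
  obtain ⟨v, hv, hQv⟩ := exists_mulVec_eq_zero_iff.mpr hz
  have h := congrArg (star v ⬝ᵥ ·) hQv
  simp only [add_mulVec, sub_mulVec, smul_mulVec, one_mulVec, dotProduct_add, dotProduct_sub,
    dotProduct_smul, dotProduct_zero, smul_eq_mul] at h
  have ha := Complex.lt_def.mp (PosDef.one.dotProduct_mulVec_pos hv)
  have hm := Complex.lt_def.mp (hM.dotProduct_mulVec_pos hv)
  have hh := hH.im_star_dotProduct_mulVec_self v
  rw [one_mulVec] at ha
  have him := congrArg Complex.im h
  simp only [Complex.add_im, Complex.sub_im, Complex.mul_im, sq, Complex.mul_re] at him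
  simp only [Complex.zero_re, Complex.zero_im, RCLike.im_to_complex] at ha hm hh him
  rw [← ha.2, ← hm.2, hh] at him
  have hfactor : z.im * (2 * z.re * (star v ⬝ᵥ v).re - (star v ⬝ᵥ M *ᵥ v).re) = 0 := by
    linarith
  refine (mul_eq_zero.mp hfactor).resolve_right fun h0 => ?_
  nlinarith [mul_nonpos_of_nonpos_of_nonneg hre ha.1.le]

end ComplexRoots

section RealRoots

variable {n : Type*} [DecidableEq n] {M H : Matrix n n ℝ}

theorem isHermitian_sq_smul_one_sub_smul_add (hM : M.IsHermitian) (hH : H.IsHermitian)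
    (x : ℝ) : (x ^ 2 • 1 - x • M + H).IsHermitian :=
  ((isHermitian_one.smul (.all _)).sub (hM.smul (.all x))).add hH

theorem posDef_sq_smul_one_sub_smul_add_sub (hM : M.PosDef) {x y : ℝ} (hyx : y < x)
    (hx : x ≤ 0) : ((y ^ 2 • 1 - y • M + H) - (x ^ 2 • 1 - x • M + H)).PosDef := by
  rw [show (y ^ 2 • 1 - y • M + H) - (x ^ 2 • 1 - x • M + H) =
    (y ^ 2 - x ^ 2) • 1 + (x - y) • M by module]
  exact (PosDef.one.smul (by nlinarith)).add (hM.smul (by linarith))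

variable [Fintype n]

theorem exists_neg_det_eq_zero (hH : H.IsHermitian) {i₀ : n}
    (hH₀ : ∀ i ≠ i₀, 0 < hH.eigenvalues i) (hneg : hH.eigenvalues i₀ < 0) :
    ∃ x : ℝ, x < 0 ∧ det (x ^ 2 • 1 - x • M + H) = 0 := by
  have hdetH : H.det < 0 := by
    rw [hH.det_eq_prod_eigenvalues, ← Finset.mul_prod_erase _ _ (Finset.mem_univ i₀)]
    exact mul_neg_of_neg_of_pos hneg
      (Finset.prod_pos fun i hi => hH₀ i (Finset.ne_of_mem_erase hi))
  set q := (quadPencil M H).det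
  have hq : (fromBlocks 0 (-H) 1 M).charpoly = q := charpoly_fromBlocks_zero_neg_one M H
  have heven : Even q.natDegree := by
    rw [← hq, charpoly_natDegree_eq_dim, Fintype.card_sum]
    exact ⟨_, rfl⟩
  have hq0 : q.eval 0 < 0 := by simpa [q, eval_det_quadPencil] using hdetH
  obtain ⟨t, ht, ht0⟩ :=
    (((hq ▸ charpoly_monic _).eventually_atBot_eval_pos heven).and (eventually_lt_atBot 0)).exists
  obtain ⟨x, ⟨-, hx0⟩, hx⟩ :=
    intermediate_value_Icc' ht0.le q.continuous.continuousOn ⟨hq0.le, ht.le⟩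
  refine ⟨x, lt_of_le_of_ne hx0 (by rintro rfl; exact hq0.ne hx), ?_⟩
  rwa [← eval_det_quadPencil]

theorem exists_eigenvalues_of_det_eq_zero (hH : H.IsHermitian) {i₀ : n}
    (hH₀ : ∀ i ≠ i₀, 0 < hH.eigenvalues i) (hM : M.PosDef) {x : ℝ} (hx : x < 0)
    (hroot : det (x ^ 2 • 1 - x • M + H) = 0) :
    ∃ k, (isHermitian_sq_smul_one_sub_smul_add hM.1 hH x).eigenvalues k = 0 ∧
      ∀ j ≠ k, 0 < (isHermitian_sq_smul_one_sub_smul_add hM.1 hH x).eigenvalues j := by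
  set hB := isHermitian_sq_smul_one_sub_smul_add hM.1 hH x
  obtain ⟨k, -, hk⟩ :=
    Finset.prod_eq_zero_iff.mp (by simpa [hB.det_eq_prod_eigenvalues] using hroot)
  refine ⟨k, hk, fun j hjk => hH.eigenvalues_pos_of_posSemidef_sub hB ?_ hH₀ hk.le hjk⟩
  simpa using (posDef_sq_smul_one_sub_smul_add_sub (H := H) hM hx le_rfl).posSemidef

theorem posDef_of_lt_of_det_eq_zero (hH : H.IsHermitian) {i₀ : n}
    (hH₀ : ∀ i ≠ i₀, 0 < hH.eigenvalues i) (hM : M.PosDef) {x y : ℝ} (hx : x < 0)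
    (hroot : det (x ^ 2 • 1 - x • M + H) = 0) (hyx : y < x) :
    (y ^ 2 • 1 - y • M + H).PosDef := by
  obtain ⟨k, hk, hpos⟩ := exists_eigenvalues_of_det_eq_zero hH hH₀ hM hx hroot
  have hpsd : (x ^ 2 • 1 - x • M + H).PosSemidef :=
    (isHermitian_sq_smul_one_sub_smul_add hM.1 hH x).posSemidef_iff_eigenvalues_nonneg.mpr
      fun j => by
        rcases eq_or_ne j k with rfl | hj
        exacts [hk.ge, (hpos j hj).le]
  have h := PosDef.posSemidef_add hpsd (posDef_sq_smul_one_sub_smul_add_sub (H := H) hM hyx hx.le)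
  rwa [add_sub_cancel] at h

theorem eq_of_det_eq_zero (hH : H.IsHermitian) {i₀ : n} (hH₀ : ∀ i ≠ i₀, 0 < hH.eigenvalues i)
    (hM : M.PosDef) {x y : ℝ} (hx : x < 0) (hy : y < 0)
    (hxroot : det (x ^ 2 • 1 - x • M + H) = 0) (hyroot : det (y ^ 2 • 1 - y • M + H) = 0) :
    x = y := by
  by_contra hxy
  rcases lt_or_gt_of_ne hxy with h | h
  · exact (posDef_of_lt_of_det_eq_zero hH hH₀ hM hy hyroot h).det_pos.ne' hxroot
  · exact (posDef_of_lt_of_det_eq_zero hH hH₀ hM hx hxroot h).det_pos.ne' hyroot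

theorem eval_derivative_det_quadPencil_neg (hH : H.IsHermitian) {i₀ : n}
    (hH₀ : ∀ i ≠ i₀, 0 < hH.eigenvalues i) (hM : M.PosDef) {x : ℝ} (hx : x < 0)
    (hroot : det (x ^ 2 • 1 - x • M + H) = 0) :
    (derivative (quadPencil M H).det).eval x < 0 := by
  obtain ⟨k, hk, hpos⟩ := exists_eigenvalues_of_det_eq_zero hH hH₀ hM hx hroot
  set hB := isHermitian_sq_smul_one_sub_smul_add hM.1 hH x
  have hvv : ⇑(hB.eigenvectorBasis k) ⬝ᵥ ⇑(hB.eigenvectorBasis k) = 1 := by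
    simpa using hB.eigenvectorBasis.dotProduct_eq_ite k k
  have hvB : ⇑(hB.eigenvectorBasis k) ᵥ* (quadPencil M H).map (eval x) = 0 := by
    rw [quadPencil_map_eval, ← mulVec_transpose, ← conjTranspose_eq_transpose_of_trivial, hB.eq,
      hB.mulVec_eigenvectorBasis, hk, zero_smul]
  have hvM : 0 < ⇑(hB.eigenvectorBasis k) ⬝ᵥ M *ᵥ ⇑(hB.eigenvectorBasis k) := by
    simpa using hM.dotProduct_mulVec_pos (x := ⇑(hB.eigenvectorBasis k))
      (fun h => by simp [h] at hvv)
  have hc : 0 < ∏ j ∈ Finset.univ.erase k, hB.eigenvalues j :=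
    Finset.prod_pos fun j hj => hpos j (Finset.ne_of_mem_erase hj)
  have key := eval_derivative_det_mul_dotProduct (quadPencil M H) x hvB ⇑(hB.eigenvectorBasis k)
  rw [quadPencil_map_derivative_eval, quadPencil_map_eval, hB.adjugate_mulVec_eigenvectorBasis,
    mulVec_smul, dotProduct_smul, sub_mulVec, smul_mulVec, one_mulVec, dotProduct_sub,
    dotProduct_smul, hvv] at key
  simp only [RCLike.ofReal_real_eq_id, id, smul_eq_mul, mul_one] at key
  nlinarith

theorem exists_neg_eq_of_mem_roots (hH : H.IsHermitian) (hHinv : IsUnit H) (hM : M.PosDef)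
    {z : ℂ} (hz : z ∈ ((fromBlocks 0 (-H) 1 M).charpoly.map (algebraMap ℝ ℂ)).roots)
    (hre : z.re ≤ 0) : ∃ x : ℝ, x < 0 ∧ (x : ℂ) = z ∧ det (x ^ 2 • 1 - x • M + H) = 0 := by
  have hroot := isRoot_of_mem_roots hz
  have hmap : (fromBlocks 0 (-H) 1 M).charpoly.map (algebraMap ℝ ℂ) =
      (fromBlocks 0 (-H.map ((↑) : ℝ → ℂ)) 1 (M.map ((↑) : ℝ → ℂ))).charpoly := by
    rw [← charpoly_map, fromBlocks_map, Matrix.map_zero _ (map_zero _),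
      Matrix.map_one _ (map_zero _) (map_one _), Matrix.map_neg _ (map_neg _)]
    rfl
  have hzdet : det (z ^ 2 • 1 - z • M.map ((↑) : ℝ → ℂ) + H.map ((↑) : ℝ → ℂ)) = 0 := by
    rwa [hmap, charpoly_fromBlocks_zero_neg_one, IsRoot, eval_det_quadPencil] at hroot
  have him := im_eq_zero_of_det_eq_zero hM.map_ofReal (hH.map _ fun _ => by simp) hzdet hre
  have hzre : (z.re : ℂ) = z := Complex.ext rfl (by simp [him])
  have hxroot : det (z.re ^ 2 • 1 - z.re • M + H) = 0 := by
    rw [← hzre, IsRoot, eval_map, ← Complex.coe_algebraMap, eval₂_at_apply,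
      charpoly_fromBlocks_zero_neg_one, eval_det_quadPencil] at hroot
    exact (map_eq_zero_iff _ (algebraMap ℝ ℂ).injective).mp hroot
  refine ⟨z.re, lt_of_le_of_ne hre fun h0 => ?_, hzre, hxroot⟩
  rw [h0] at hxroot
  exact ((isUnit_iff_isUnit_det H).mp hHinv).ne_zero (by simpa using hxroot)

theorem rootMultiplicity_charpoly_fromBlocks_eq_one (hH : H.IsHermitian) {i₀ : n}
    (hH₀ : ∀ i ≠ i₀, 0 < hH.eigenvalues i) (hM : M.PosDef) {x : ℝ} (hx : x < 0)
    (hroot : det (x ^ 2 • 1 - x • M + H) = 0) :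
    (fromBlocks 0 (-H) 1 M).charpoly.rootMultiplicity x = 1 := by
  have hp0 := (charpoly_monic (fromBlocks 0 (-H) 1 M)).ne_zero
  rw [charpoly_fromBlocks_zero_neg_one] at hp0 ⊢
  have hder := (eval_derivative_det_quadPencil_neg hH hH₀ hM hx hroot).ne
  refine le_antisymm (not_lt.mp fun h => hder ((one_lt_rootMultiplicity_iff_isRoot hp0).mp h).2)
    ((rootMultiplicity_pos hp0).mpr ?_)
  rwa [IsRoot, eval_det_quadPencil]

end RealRoots

end Matrix

theorem stmt_1_general (d : ℕ)
    (H M : Matrix (Fin d) (Fin d) ℝ)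
    (hHsymm : H.IsHermitian) (hHinv : IsUnit H)
    (hHneg : (Finset.univ.filter (fun i => hHsymm.eigenvalues i < 0)).card = 1)
    (hM : M.PosDef)
    (Φ : Matrix (Fin d ⊕ Fin d) (Fin d ⊕ Fin d) ℝ)
    (hΦ : Φ = Matrix.fromBlocks 0 (-H) 1 M) :
    IsUnit Φ ∧
    (∀ z ∈ (Φ.map (fun x : ℝ => (x : ℂ))).charpoly.roots, z.re ≠ 0) ∧
    ((Φ.map (fun x : ℝ => (x : ℂ))).charpoly.roots.filter (fun z => z.re < 0)).card = 1 ∧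
    (∀ z ∈ (Φ.map (fun x : ℝ => (x : ℂ))).charpoly.roots, z.re < 0 → z.im = 0) := by
  obtain ⟨i₀, hneg, hpos⟩ := hHsymm.exists_eigenvalues_of_card_filter_neg_eq_one hHinv hHneg
  obtain ⟨x, hx, hxroot⟩ := exists_neg_det_eq_zero (M := M) hHsymm hpos hneg
  subst hΦ
  rw [show (fun x : ℝ => (x : ℂ)) = ⇑(algebraMap ℝ ℂ) from rfl, charpoly_map]
  have hnonpos : ∀ z ∈ ((fromBlocks 0 (-H) 1 M).charpoly.map (algebraMap ℝ ℂ)).roots,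
      z.re ≤ 0 → z = x := by
    intro z hz hre
    obtain ⟨y, hy, rfl, hyroot⟩ := exists_neg_eq_of_mem_roots hHsymm hHinv hM hz hre
    rw [eq_of_det_eq_zero hHsymm hpos hM hy hx hyroot hxroot]
  refine ⟨?_, fun z hz h0 => ?_, ?_, fun z hz hlt => ?_⟩
  · rw [isUnit_iff_isUnit_det, det_fromBlocks_zero_neg_one, ← isUnit_iff_isUnit_det]
    exact hHinv
  · have := congrArg Complex.re (hnonpos z hz h0.le)
    simp only [Complex.ofReal_re] at this
    linarith
  · rw [Multiset.filter_congr fun z hz => ⟨fun h => hnonpos z hz h.le, fun h => by simpa [h]⟩,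
      Multiset.filter_eq', Multiset.card_replicate, count_roots]
    exact (eq_rootMultiplicity_map (algebraMap ℝ ℂ).injective x).symm.trans
      (rootMultiplicity_charpoly_fromBlocks_eq_one hHsymm hpos hM hx hxroot)
  · simp [hnonpos z hz hlt.le]

/-- Let `H` be a real symmetric invertible `d × d` matrix with exactly one
negative eigenvalue (counted with multiplicity) and let `M` be symmetric positive definite.
Then the block matrix `Φ = [[0, -H],[I, M]]` is invertible, has no eigenvalue (over `ℂ`) on
the imaginary axis, has exactly one eigenvalue (with algebraic multiplicity) in `{Re z < 0}`,
and that eigenvalue is real (and negative). -/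
theorem stmt_1 (d : ℕ) (hd : 1 ≤ d)
    (H M : Matrix (Fin d) (Fin d) ℝ)
    (hHsymm : H.IsHermitian) (hHinv : IsUnit H)
    (hHneg : (Finset.univ.filter (fun i => hHsymm.eigenvalues i < 0)).card = 1)
    (hM : M.PosDef)
    (Φ : Matrix (Fin d ⊕ Fin d) (Fin d ⊕ Fin d) ℝ)
    (hΦ : Φ = Matrix.fromBlocks 0 (-H) 1 M) :
    IsUnit Φ ∧
    (∀ z ∈ (Φ.map (fun x : ℝ => (x : ℂ))).charpoly.roots, z.re ≠ 0) ∧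
    ((Φ.map (fun x : ℝ => (x : ℂ))).charpoly.roots.filter (fun z => z.re < 0)).card = 1 ∧
    (∀ z ∈ (Φ.map (fun x : ℝ => (x : ℂ))).charpoly.roots, z.re < 0 → z.im = 0) :=
  stmt_1_general d H M hHsymm hHinv hHneg hM Φ hΦ
end

section
/- Let d ≥ 1 and let V : ℝ^d → ℝ be continuous. Define W : ℝ^{2d} → ℝ by W(x,v) = V(x)/2 + |v|²/4 and let π : ℝ^{2d} → ℝ^d be the projection π(x,v) = x. Then for every σ ∈ ℝ: (i) for each connected component Ẽ of the open set {W < σ}, the image π(Ẽ) is a connected component of the open set {x ∈ ℝ^d : V(x)/2 < σ}; (ii) the induced map from the set of connected components of {W < σ} to the set of connected components of {V/2 < σ} is a bijection. -/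
open Set

/-- Let `V : ℝ^d → ℝ` be continuous and `W(x,v) = V(x)/2 + |v|²/4` on
`ℝ^{2d}`, with `π(x,v) = x`. For every `σ ∈ ℝ`: (i) the image under `π` of any connected
component of `{W < σ}` is a connected component of `{V/2 < σ}`; (ii) the induced map on
connected components is injective and surjective (a bijection). -/
theorem stmt_6 (d : ℕ) (hd : 1 ≤ d)
    (V : EuclideanSpace ℝ (Fin d) → ℝ) (hV : Continuous V)
    (W : EuclideanSpace ℝ (Fin d) × EuclideanSpace ℝ (Fin d) → ℝ)
    (hW : ∀ x v, W (x, v) = V x / 2 + ‖v‖ ^ 2 / 4)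
    (σ : ℝ) :
    (∀ Et : Set (EuclideanSpace ℝ (Fin d) × EuclideanSpace ℝ (Fin d)),
      (∃ p, W p < σ ∧ Et = connectedComponentIn {q | W q < σ} p) →
      ∃ x, V x / 2 < σ ∧ Prod.fst '' Et = connectedComponentIn {x | V x / 2 < σ} x) ∧
    (∀ Et1 Et2 : Set (EuclideanSpace ℝ (Fin d) × EuclideanSpace ℝ (Fin d)),
      (∃ p, W p < σ ∧ Et1 = connectedComponentIn {q | W q < σ} p) →
      (∃ p, W p < σ ∧ Et2 = connectedComponentIn {q | W q < σ} p) →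
      Prod.fst '' Et1 = Prod.fst '' Et2 → Et1 = Et2) ∧
    (∀ E : Set (EuclideanSpace ℝ (Fin d)),
      (∃ x, V x / 2 < σ ∧ E = connectedComponentIn {x | V x / 2 < σ} x) →
      ∃ Et : Set (EuclideanSpace ℝ (Fin d) × EuclideanSpace ℝ (Fin d)),
        (∃ p, W p < σ ∧ Et = connectedComponentIn {q | W q < σ} p) ∧ Prod.fst '' Et = E) := by
  set SV : Set (EuclideanSpace ℝ (Fin d)) := {x | V x / 2 < σ} with hSVdef
  set SW : Set (EuclideanSpace ℝ (Fin d) × EuclideanSpace ℝ (Fin d)) := {q | W q < σ} with hSWdef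
  have hWeq : ∀ p : EuclideanSpace ℝ (Fin d) × EuclideanSpace ℝ (Fin d),
      W p = V p.1 / 2 + ‖p.2‖ ^ 2 / 4 := fun p => hW p.1 p.2
  have hproj : ∀ p ∈ SW, p.1 ∈ SV := by
    intro p hp
    have h1 : W p < σ := hp
    rw [hWeq] at h1
    have := sq_nonneg ‖p.2‖
    simp only [hSVdef, mem_setOf_eq]
    nlinarith
  have hzero : ∀ x ∈ SV, (x, (0 : EuclideanSpace ℝ (Fin d))) ∈ SW := by
    intro x hx
    have hx' : V x / 2 < σ := hx
    show W (x, 0) < σ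
    rw [hW]
    simp [hx']
  -- Key lemma
  have key : ∀ p ∈ SW, connectedComponentIn SW p
      = (Prod.fst ⁻¹' (connectedComponentIn SV p.1)) ∩ SW := by
    intro p hp
    set C := connectedComponentIn SV p.1 with hCdef
    set T := (Prod.fst ⁻¹' C) ∩ SW with hTdef
    have hx : p.1 ∈ SV := hproj p hp
    have hpC : p.1 ∈ C := mem_connectedComponentIn hx
    have hCsub : C ⊆ SV := connectedComponentIn_subset _ _
    have hCconn : IsPreconnected C := isPreconnected_connectedComponentIn
    -- the base slice
    set A : Set (EuclideanSpace ℝ (Fin d) × EuclideanSpace ℝ (Fin d)) :=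
      C ×ˢ ({0} : Set (EuclideanSpace ℝ (Fin d))) with hAdef
    have hAsub : A ⊆ T := by
      rintro ⟨y, v⟩ ⟨hy, hv⟩
      simp only [mem_singleton_iff] at hv
      subst hv
      exact ⟨hy, hzero y (hCsub hy)⟩
    have hAconn : IsPreconnected A := hCconn.prod isPreconnected_singleton
    have hA0 : (p.1, (0 : EuclideanSpace ℝ (Fin d))) ∈ A := ⟨hpC, rfl⟩
    -- fibers via segments
    have hseg : ∀ q ∈ T, ({q.1} ×ˢ segment ℝ (0 : EuclideanSpace ℝ (Fin d)) q.2) ⊆ T := by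
      rintro q ⟨hq1, hq2⟩ ⟨y, w⟩ ⟨hy, hw⟩
      simp only [mem_singleton_iff] at hy
      subst hy
      refine ⟨hq1, ?_⟩
      rw [segment_eq_image] at hw
      obtain ⟨t, ht, rfl⟩ := hw
      have hWq : W q < σ := hq2
      rw [hWeq] at hWq
      show W (q.1, _) < σ
      rw [hW]
      have hn : ‖(1 - t) • (0 : EuclideanSpace ℝ (Fin d)) + t • q.2‖ ≤ ‖q.2‖ := by
        rw [smul_zero, zero_add, norm_smul, Real.norm_eq_abs,
          abs_of_nonneg ht.1]
        calc t * ‖q.2‖ ≤ 1 * ‖q.2‖ := by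
              exact mul_le_mul_of_nonneg_right ht.2 (norm_nonneg _)
          _ = ‖q.2‖ := one_mul _
      have hn2 := pow_le_pow_left₀ (norm_nonneg _) hn 2
      linarith
    have hTconn : IsPreconnected T := by
      have hcover : T = ⋃ q ∈ T, (A ∪ ({q.1} ×ˢ segment ℝ (0 : EuclideanSpace ℝ (Fin d)) q.2)) := by
        apply Subset.antisymm
        · intro q hq
          refine mem_iUnion₂.2 ⟨q, hq, Or.inr ⟨rfl, right_mem_segment _ _ _⟩⟩
        · intro z hz
          obtain ⟨q, hq, hz⟩ := mem_iUnion₂.1 hz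
          rcases hz with hz | hz
          · exact hAsub hz
          · exact hseg q hq hz
      rw [hcover, biUnion_eq_iUnion]
      apply isPreconnected_iUnion
      · exact ⟨(p.1, (0 : EuclideanSpace ℝ (Fin d))), mem_iInter.2 fun q => Or.inl hA0⟩
      · rintro ⟨q, hq⟩
        have hq1 : q.1 ∈ C := hq.1
        apply IsPreconnected.union (q.1, (0 : EuclideanSpace ℝ (Fin d)))
        · exact ⟨hq1, rfl⟩
        · exact ⟨rfl, left_mem_segment _ _ _⟩
        · exact hAconn
        · exact (isPreconnected_singleton.prod (convex_segment _ _).isPreconnected)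
    have hpT : p ∈ T := ⟨hpC, hp⟩
    apply Subset.antisymm
    · -- component ⊆ T
      intro q hq
      have hqSW : q ∈ SW := connectedComponentIn_subset _ _ hq
      refine ⟨?_, hqSW⟩
      have himg : IsPreconnected (Prod.fst '' connectedComponentIn SW p) :=
        (isPreconnected_connectedComponentIn).image _ continuous_fst.continuousOn
      have himgsub : Prod.fst '' connectedComponentIn SW p ⊆ SV := by
        rintro y ⟨z, hz, rfl⟩
        exact hproj z (connectedComponentIn_subset _ _ hz)
      have hmem : p.1 ∈ Prod.fst '' connectedComponentIn SW p :=
        ⟨p, mem_connectedComponentIn hp, rfl⟩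
      have := himg.subset_connectedComponentIn hmem himgsub
      exact this ⟨q, hq, rfl⟩
    · exact hTconn.subset_connectedComponentIn hpT (inter_subset_right)
  -- image of component
  have himg : ∀ p ∈ SW, Prod.fst '' connectedComponentIn SW p
      = connectedComponentIn SV p.1 := by
    intro p hp
    rw [key p hp]
    apply Subset.antisymm
    · rintro y ⟨z, ⟨hz1, _⟩, rfl⟩
      exact hz1
    · intro y hy
      exact ⟨(y, 0), ⟨hy, hzero y (connectedComponentIn_subset _ _ hy)⟩, rfl⟩
  refine ⟨?_, ?_, ?_⟩
  · rintro Et ⟨p, hp, rfl⟩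
    exact ⟨p.1, hproj p hp, himg p hp⟩
  · rintro Et1 Et2 ⟨p, hp, rfl⟩ ⟨q, hq, rfl⟩ himgeq
    rw [himg p hp, himg q hq] at himgeq
    rw [key p hp, key q hq, himgeq]
  · rintro E ⟨x, hx, rfl⟩
    refine ⟨connectedComponentIn SW (x, 0), ⟨(x, 0), hzero x hx, rfl⟩, ?_⟩
    exact himg (x, 0) (hzero x hx)
end

section
/- Let d ≥ 1 and let V : ℝ^d → ℝ be continuous. Define W : ℝ^{2d} → ℝ by W(x,v) = V(x)/2 + |v|²/4 and let π : ℝ^{2d} → ℝ^d be the projection π(x,v) = x. Then for every σ ∈ ℝ, every connected component Ẽ of {W < σ}, and every x ∈ ℝ^d, the point (x,0) belongs to the topological boundary of Ẽ if and only if x belongs to the topological boundary of π(Ẽ). -/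
/-- Let `V : ℝ^d → ℝ` be continuous, `W(x,v) = V(x)/2 + |v|²/4` on `ℝ^{2d}`,
and `π(x,v) = x`. For every `σ ∈ ℝ`, every connected component `Ẽ` of `{W < σ}` and every
`x ∈ ℝ^d`: `(x,0)` belongs to the boundary of `Ẽ` iff `x` belongs to the boundary of `π(Ẽ)`. -/
theorem stmt_7 (d : ℕ) (hd : 1 ≤ d)
    (V : EuclideanSpace ℝ (Fin d) → ℝ) (hV : Continuous V)
    (W : EuclideanSpace ℝ (Fin d) × EuclideanSpace ℝ (Fin d) → ℝ)
    (hW : ∀ x v, W (x, v) = V x / 2 + ‖v‖ ^ 2 / 4)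
    (σ : ℝ)
    (Et : Set (EuclideanSpace ℝ (Fin d) × EuclideanSpace ℝ (Fin d)))
    (hEt : ∃ p, W p < σ ∧ Et = connectedComponentIn {q | W q < σ} p)
    (x : EuclideanSpace ℝ (Fin d)) :
    (x, (0 : EuclideanSpace ℝ (Fin d))) ∈ frontier Et ↔ x ∈ frontier (Prod.fst '' Et) := by
  obtain ⟨p, hp, rfl⟩ := hEt
  set U : Set (EuclideanSpace ℝ (Fin d) × EuclideanSpace ℝ (Fin d)) := {q | W q < σ} with hU
  have hWeq : W = fun q => V q.1 / 2 + ‖q.2‖ ^ 2 / 4 := by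
    ext ⟨a, b⟩; exact hW a b
  have hWc : Continuous W := by rw [hWeq]; fun_prop
  have hUopen : IsOpen U := isOpen_lt hWc continuous_const
  set Et := connectedComponentIn U p with hEtdef
  have hEopen : IsOpen Et := hUopen.connectedComponentIn
  have hEsub : Et ⊆ U := connectedComponentIn_subset U p
  -- key: y ∈ π(Et) ↔ (y,0) ∈ Et
  have key : ∀ y, y ∈ Prod.fst '' Et ↔ (y, (0 : EuclideanSpace ℝ (Fin d))) ∈ Et := by
    intro y
    constructor
    · rintro ⟨⟨y', v⟩, hyv, rfl⟩
      have hEq : Et = connectedComponentIn U (y', v) := connectedComponentIn_eq hyv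
      set s : Set (EuclideanSpace ℝ (Fin d) × EuclideanSpace ℝ (Fin d)) :=
        (fun t : ℝ => ((y', t • v) : EuclideanSpace ℝ (Fin d) × EuclideanSpace ℝ (Fin d))) ''
          Set.Icc 0 1 with hs
      have hscon : IsPreconnected s :=
        isPreconnected_Icc.image _ (Continuous.continuousOn (by fun_prop))
      have hsU : s ⊆ U := by
        rintro _ ⟨t, ⟨ht0, ht1⟩, rfl⟩
        have hWv : W (y', v) < σ := hEsub hyv
        rw [hW] at hWv
        have : W (y', t • v) < σ := by
          rw [hW, norm_smul, Real.norm_eq_abs, abs_of_nonneg ht0]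
          have hv : (0:ℝ) ≤ ‖v‖ := norm_nonneg v
          nlinarith [mul_nonneg ht0 hv, mul_le_of_le_one_left hv ht1, mul_nonneg (mul_nonneg ht0 hv) hv]
        exact this
      have h1s : ((y', v) : _) ∈ s := ⟨1, Set.mem_Icc.mpr ⟨zero_le_one, le_refl 1⟩, by simp⟩
      have h0s : ((y', (0 : EuclideanSpace ℝ (Fin d))) : _) ∈ s :=
        ⟨0, Set.mem_Icc.mpr ⟨le_refl 0, zero_le_one⟩, by simp⟩
      have : s ⊆ connectedComponentIn U (y', v) :=
        hscon.subset_connectedComponentIn h1s hsU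
      rw [hEq]
      exact this h0s
    · intro h; exact ⟨(y, 0), h, rfl⟩
  have hPopen : IsOpen (Prod.fst '' Et) := isOpenMap_fst _ hEopen
  rw [hEopen.frontier_eq, hPopen.frontier_eq, Set.mem_diff, Set.mem_diff]
  constructor
  · rintro ⟨h1, h2⟩
    refine ⟨?_, fun h => h2 ((key x).1 h)⟩
    exact image_closure_subset_closure_image continuous_fst ⟨(x, 0), h1, rfl⟩
  · rintro ⟨h1, h2⟩
    have hg : Continuous fun y : EuclideanSpace ℝ (Fin d) =>
        ((y, (0 : EuclideanSpace ℝ (Fin d))) : _) := by fun_prop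
    have himg : Prod.fst '' Et =
        (fun y : EuclideanSpace ℝ (Fin d) => ((y, (0 : EuclideanSpace ℝ (Fin d))) : _)) ⁻¹' Et := by
      ext y; exact key y
    refine ⟨?_, fun h => h2 ((key x).2 h)⟩
    have := hg.closure_preimage_subset Et
    rw [himg] at h1
    exact this h1
end

section
/- Let d ≥ 1 and let V : ℝ^d → ℝ be smooth with all critical points nondegenerate. Define W : ℝ^{2d} → ℝ by W(x,v) = V(x)/2 + |v|²/4. Then: (i) the critical points of W are exactly the points (x,0) with x a critical point of V, and (x,0) is a nondegenerate critical point of W of index 1 if and only if x is a nondegenerate critical point of V of index 1; (ii) a point (s,0), with s a nondegenerate critical point of V of index 1, lies in the closure of two distinct connected components of {W < W(s,0)} if and only if s lies in the closure of two distinct connected components of {x : V(x)/2 < V(s)/2}. In particular, the separating saddle points of W are exactly the points (s,0) where s is a separating saddle point of V/2, and W and V/2 have the same separating saddle values. -/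
/-- The Hessian of `Y` at `x`, as a continuous bilinear form. -/
noncomputable def hessianAt {E : Type*} [NormedAddCommGroup E] [NormedSpace ℝ E]
    (Y : E → ℝ) (x : E) : E →L[ℝ] E →L[ℝ] ℝ :=
  fderiv ℝ (fun y => fderiv ℝ Y y) x

/-- `x` is a nondegenerate critical point of `Y`. -/
def IsNondegenerateCriticalPt {E : Type*} [NormedAddCommGroup E] [NormedSpace ℝ E]
    (Y : E → ℝ) (x : E) : Prop :=
  fderiv ℝ Y x = 0 ∧ ∀ v : E, (∀ w : E, hessianAt Y x v w = 0) → v = 0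

/-- The Hessian of `Y` at `x` has index `k`: the maximal dimension of a subspace on which the
Hessian quadratic form is negative definite equals `k`. -/
def HasMorseIndex {E : Type*} [NormedAddCommGroup E] [NormedSpace ℝ E]
    (Y : E → ℝ) (x : E) (k : ℕ) : Prop :=
  (∃ W : Submodule ℝ E, Module.finrank ℝ W = k ∧
      ∀ v ∈ W, v ≠ 0 → hessianAt Y x v v < 0) ∧
  (∀ W : Submodule ℝ E, (∀ v ∈ W, v ≠ 0 → hessianAt Y x v v < 0) →
      Module.finrank ℝ W ≤ k)

/-- `p` lies in the closure of two distinct connected components of `S`. -/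
def InClosureOfTwoComponents {X : Type*} [TopologicalSpace X] (S : Set X) (p : X) : Prop :=
  ∃ q ∈ S, ∃ q' ∈ S,
    connectedComponentIn S q ≠ connectedComponentIn S q' ∧
    p ∈ closure (connectedComponentIn S q) ∧ p ∈ closure (connectedComponentIn S q')

/-- `s` is a separating saddle point of `Y`: a nondegenerate critical point of index `1`
lying in the closure of two distinct connected components of `{Y < Y s}`. -/
def IsSepSaddle {E : Type*} [NormedAddCommGroup E] [NormedSpace ℝ E]
    (Y : E → ℝ) (s : E) : Prop :=
  IsNondegenerateCriticalPt Y s ∧ HasMorseIndex Y s 1 ∧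
    InClosureOfTwoComponents {y | Y y < Y s} s

set_option maxHeartbeats 1000000


noncomputable section
open ContinuousLinearMap


variable {E : Type*} [NormedAddCommGroup E] [InnerProductSpace ℝ E]

/-- first derivative of W -/
noncomputable def DW (V : E → ℝ) (x v : E) : (E × E) →L[ℝ] ℝ :=
  ((2⁻¹ : ℝ) • fderiv ℝ V x).comp (fst ℝ E E) +
  ((2⁻¹ : ℝ) • (innerSL ℝ v)).comp (snd ℝ E E)

lemma DW_apply (V : E → ℝ) (x v : E) (w : E × E) :
    DW V x v w = fderiv ℝ V x w.1 / 2 + (inner ℝ v w.2 : ℝ) / 2 := by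
  simp [DW, smul_eq_mul]; ring

lemma hasFDerivAt_W (V : E → ℝ) (hV : Differentiable ℝ V)
    (W : E × E → ℝ) (hW : ∀ x v, W (x, v) = V x / 2 + ‖v‖ ^ 2 / 4) (x v : E) :
    HasFDerivAt W (DW V x v) (x, v) := by
  have hWeq : W = fun p : E × E => (2⁻¹ : ℝ) • V p.1 + (4⁻¹ : ℝ) • ‖p.2‖ ^ 2 := by
    funext p
    obtain ⟨a, b⟩ := p
    rw [hW]
    simp [smul_eq_mul]; ring
  subst hWeq
  have h1 : HasFDerivAt (fun p : E × E => V p.1) ((fderiv ℝ V x).comp (fst ℝ E E)) (x, v) :=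
    (hV x).hasFDerivAt.comp (x, v) hasFDerivAt_fst
  have h2 := (hasFDerivAt_snd (𝕜 := ℝ) (p := ((x, v) : E × E))).norm_sq
  have h3 := (h1.const_smul (2⁻¹ : ℝ)).add (h2.const_smul (4⁻¹ : ℝ))
  refine h3.congr_fderiv ?_
  ext w <;>
    simp [DW, ContinuousLinearMap.smul_apply, smul_eq_mul, two_smul,
      ContinuousLinearMap.add_apply, ContinuousLinearMap.comp_apply] <;>
    ring

/-- `f ↦ (1/2) f ∘ fst` as a CLM. -/
noncomputable def PhiW : (E →L[ℝ] ℝ) →L[ℝ] ((E × E) →L[ℝ] ℝ) :=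
  (2⁻¹ : ℝ) • ((compL ℝ (E × E) E ℝ).flip (fst ℝ E E))

/-- `(x,v) ↦ (1/2) ⟪v,·⟫ ∘ snd` as a CLM. -/
noncomputable def PsiW : (E × E) →L[ℝ] ((E × E) →L[ℝ] ℝ) :=
  ((2⁻¹ : ℝ) • (((compL ℝ (E × E) E ℝ).flip (snd ℝ E E)).comp (innerSL ℝ))).comp (snd ℝ E E)

lemma PhiW_apply (f : E →L[ℝ] ℝ) (w : E × E) : PhiW f w = f w.1 / 2 := by
  simp [PhiW, smul_eq_mul]; ring

lemma PsiW_apply (p : E × E) (w : E × E) : PsiW p w = (inner ℝ p.2 w.2 : ℝ) / 2 := by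
  simp [PsiW, smul_eq_mul]; ring

lemma DW_eq (V : E → ℝ) (x v : E) : DW V x v = PhiW (fderiv ℝ V x) + PsiW (x, v) := by
  ext w <;> simp [DW_apply, PhiW_apply, PsiW_apply, ContinuousLinearMap.comp_apply,
    ContinuousLinearMap.add_apply, ContinuousLinearMap.inl_apply, ContinuousLinearMap.inr_apply]

lemma hessianAt_W (V : E → ℝ) (hV : ContDiff ℝ (⊤ : ℕ∞) V)
    (W : E × E → ℝ) (hW : ∀ x v, W (x, v) = V x / 2 + ‖v‖ ^ 2 / 4) (x v : E)
    (a b c e : E) :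
    hessianAt W (x, v) (a, b) (c, e) = hessianAt V x a c / 2 + (inner ℝ b e : ℝ) / 2 := by
  have hdiff : Differentiable ℝ V := hV.differentiable (by simp)
  have hfd : (fun q : E × E => fderiv ℝ W q) = fun q => PhiW (fderiv ℝ V q.1) + PsiW q := by
    funext q
    obtain ⟨y, u⟩ := q
    rw [(hasFDerivAt_W V hdiff W hW y u).fderiv, DW_eq]
  have hdV : HasFDerivAt (fun y => fderiv ℝ V y) (hessianAt V x) x := by
    have hd2 : Differentiable ℝ (fun y => fderiv ℝ V y) :=
      (hV.fderiv_right (m := 1) (WithTop.coe_le_coe.mpr le_top)).differentiable one_ne_zero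
    exact (hd2 x).hasFDerivAt
  have h2 : HasFDerivAt (fun q : E × E => fderiv ℝ V q.1)
      ((hessianAt V x).comp (fst ℝ E E)) (x, v) :=
    hdV.comp (x, v) hasFDerivAt_fst
  have h3 : HasFDerivAt (fun q : E × E => PhiW (fderiv ℝ V q.1))
      (PhiW.comp ((hessianAt V x).comp (fst ℝ E E))) (x, v) := by
    have hphi : HasFDerivAt (⇑(PhiW (E := E))) (PhiW (E := E)) (fderiv ℝ V x) :=
      ContinuousLinearMap.hasFDerivAt _
    exact HasFDerivAt.comp (x, v) (g := ⇑(PhiW (E := E))) hphi h2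
  have h4 : HasFDerivAt (𝕜 := ℝ) (fun q : E × E => PhiW (fderiv ℝ V q.1) + PsiW q)
      (PhiW.comp ((hessianAt V x).comp (fst ℝ E E)) + PsiW) (x, v) := by
    have hpsi : HasFDerivAt (⇑(PsiW (E := E))) (PsiW (E := E)) (x, v) :=
      ContinuousLinearMap.hasFDerivAt _
    exact h3.add (g := ⇑(PsiW (E := E))) hpsi
  have : hessianAt W (x, v) = PhiW.comp ((hessianAt V x).comp (fst ℝ E E)) + PsiW := by
    unfold hessianAt
    rw [hfd]
    exact h4.fderiv
  rw [this]
  simp [PhiW_apply, PsiW_apply]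

section Morse

variable {F : Type*} [NormedAddCommGroup F] [InnerProductSpace ℝ F] [FiniteDimensional ℝ F]

/-- Negative-definite subspace transfer: from the base form to the product form. -/
lemma neg_prod_of_neg (B : F →L[ℝ] F →L[ℝ] ℝ) (Q : (F × F) →L[ℝ] (F × F) →L[ℝ] ℝ)
    (hQ : ∀ a b c e : F, Q (a, b) (c, e) = B a c / 2 + (inner ℝ b e : ℝ) / 2)
    (U : Submodule ℝ F) (hU : ∀ v ∈ U, v ≠ 0 → B v v < 0) :
    ∃ U' : Submodule ℝ (F × F), Module.finrank ℝ U' = Module.finrank ℝ U ∧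
      ∀ v ∈ U', v ≠ 0 → Q v v < 0 := by
  refine ⟨U.map (LinearMap.inl ℝ F F), ?_, ?_⟩
  · exact (Submodule.equivMapOfInjective _ LinearMap.inl_injective U).finrank_eq.symm
  · rintro v hv hv0
    obtain ⟨y, hy, rfl⟩ := Submodule.mem_map.mp hv
    have hy0 : y ≠ 0 := by rintro rfl; simp at hv0
    have := hU y hy hy0
    have hQy := hQ y 0 y 0
    simp only [LinearMap.inl_apply] at *
    rw [hQy]
    simp only [inner_zero_right]
    linarith

/-- Negative-definite subspace transfer: from the product form to the base form. -/
lemma neg_of_neg_prod (B : F →L[ℝ] F →L[ℝ] ℝ) (Q : (F × F) →L[ℝ] (F × F) →L[ℝ] ℝ)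
    (hQ : ∀ a b c e : F, Q (a, b) (c, e) = B a c / 2 + (inner ℝ b e : ℝ) / 2)
    (U' : Submodule ℝ (F × F)) (hU' : ∀ v ∈ U', v ≠ 0 → Q v v < 0) :
    ∃ U : Submodule ℝ F, Module.finrank ℝ U = Module.finrank ℝ U' ∧
      ∀ v ∈ U, v ≠ 0 → B v v < 0 := by
  classical
  -- key pointwise fact
  have key : ∀ u : F × F, u ∈ U' → u ≠ 0 → u.1 ≠ 0 ∧ B u.1 u.1 < 0 := by
    intro u hu hu0
    have hQu : Q u u < 0 := hU' u hu hu0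
    have hform : Q u u = B u.1 u.1 / 2 + (inner ℝ u.2 u.2 : ℝ) / 2 := by
      have := hQ u.1 u.2 u.1 u.2; simpa using this
    have hinner : (0 : ℝ) ≤ (inner ℝ u.2 u.2 : ℝ) := real_inner_self_nonneg
    have hB : B u.1 u.1 < 0 := by rw [hform] at hQu; linarith
    refine ⟨?_, hB⟩
    rintro h1
    rw [h1] at hB
    simp at hB
  set g : U' →ₗ[ℝ] F := (LinearMap.fst ℝ F F).comp U'.subtype with hg
  have hginj : Function.Injective g := by
    rw [← LinearMap.ker_eq_bot]
    rw [Submodule.eq_bot_iff]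
    intro u hu
    by_contra hu0
    have h1 : (u : F × F).1 = 0 := hu
    have hne : (u : F × F) ≠ 0 := fun h => hu0 (Subtype.ext h)
    exact (key u u.2 hne).1 h1
  refine ⟨LinearMap.range g, ((LinearEquiv.ofInjective g hginj).finrank_eq).symm, ?_⟩
  rintro v hv hv0
  obtain ⟨u, rfl⟩ := hv
  have hne : (u : F × F) ≠ 0 := by
    rintro h
    apply hv0
    have : g u = (u : F × F).1 := rfl
    rw [this, h]; rfl
  exact (key u u.2 hne).2

end Morse

lemma morse_index_prod_iff {F : Type*} [NormedAddCommGroup F] [InnerProductSpace ℝ F]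
    [FiniteDimensional ℝ F]
    (B : F →L[ℝ] F →L[ℝ] ℝ) (Q : (F × F) →L[ℝ] (F × F) →L[ℝ] ℝ)
    (hQ : ∀ a b c e : F, Q (a, b) (c, e) = B a c / 2 + (inner ℝ b e : ℝ) / 2) (k : ℕ) :
    ((∃ U' : Submodule ℝ (F × F), Module.finrank ℝ U' = k ∧ ∀ v ∈ U', v ≠ 0 → Q v v < 0) ∧
      (∀ U' : Submodule ℝ (F × F), (∀ v ∈ U', v ≠ 0 → Q v v < 0) → Module.finrank ℝ U' ≤ k)) ↔
    ((∃ U : Submodule ℝ F, Module.finrank ℝ U = k ∧ ∀ v ∈ U, v ≠ 0 → B v v < 0) ∧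
      (∀ U : Submodule ℝ F, (∀ v ∈ U, v ≠ 0 → B v v < 0) → Module.finrank ℝ U ≤ k)) := by
  constructor
  · rintro ⟨⟨U', hU'k, hU'neg⟩, hbound⟩
    constructor
    · obtain ⟨U, hUk, hUneg⟩ := neg_of_neg_prod B Q hQ U' hU'neg
      exact ⟨U, hUk.trans hU'k, hUneg⟩
    · intro U hUneg
      obtain ⟨U', hU'k, hU'neg⟩ := neg_prod_of_neg B Q hQ U hUneg
      have := hbound U' hU'neg
      omega
  · rintro ⟨⟨U, hUk, hUneg⟩, hbound⟩
    constructor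
    · obtain ⟨U', hU'k, hU'neg⟩ := neg_prod_of_neg B Q hQ U hUneg
      exact ⟨U', hU'k.trans hUk, hU'neg⟩
    · intro U' hU'neg
      obtain ⟨U, hUk, hUneg2⟩ := neg_of_neg_prod B Q hQ U' hU'neg
      have := hbound U hUneg2
      omega


section Components

variable {G H : Type*} [NormedAddCommGroup G] [NormedSpace ℝ G]
  [NormedAddCommGroup H] [NormedSpace ℝ H]

lemma components_iff (T : Set G) (S : Set (G × H))
    (h1 : ∀ p : G × H, p ∈ S → ∀ t : ℝ, t ∈ Set.Icc (0:ℝ) 1 → (p.1, t • p.2) ∈ S)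
    (h2 : ∀ p : G × H, p ∈ S → p.1 ∈ T)
    (h3 : ∀ x ∈ T, ((x, (0:H)) : G × H) ∈ S)
    (s : G) :
    InClosureOfTwoComponents S (s, (0:H)) ↔ InClosureOfTwoComponents T s := by
  -- A: every point of S is in the same component as its "zero-velocity" projection
  have hA : ∀ p ∈ S, connectedComponentIn S p = connectedComponentIn S (p.1, (0:H)) := by
    intro p hp
    set γ : ℝ → G × H := fun t => (p.1, t • p.2) with hγ
    have hγc : Continuous γ := by continuity
    have himg : γ '' Set.Icc (0:ℝ) 1 ⊆ S := by
      rintro q ⟨t, ht, rfl⟩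
      exact h1 p hp t ht
    have hconn : IsPreconnected (γ '' Set.Icc (0:ℝ) 1) :=
      (isPreconnected_Icc).image γ hγc.continuousOn
    have h0 : (p.1, (0:H)) ∈ γ '' Set.Icc (0:ℝ) 1 :=
      ⟨0, by norm_num, by simp [hγ]⟩
    have h1' : p ∈ γ '' Set.Icc (0:ℝ) 1 :=
      ⟨1, by norm_num, by simp [hγ]⟩
    have hsub : γ '' Set.Icc (0:ℝ) 1 ⊆ connectedComponentIn S p :=
      hconn.subset_connectedComponentIn h1' himg
    exact (connectedComponentIn_eq (hsub h0))
  -- projections of components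
  have hπ : ∀ p ∈ S, Prod.fst '' connectedComponentIn S p ⊆ connectedComponentIn T p.1 := by
    intro p hp
    refine ((continuous_fst).image_connectedComponentIn_subset hp).trans ?_
    exact connectedComponentIn_mono _ (by rintro y ⟨q, hq, rfl⟩; exact h2 q hq)
  have hj : ∀ x ∈ T, (fun y : G => (y, (0:H))) '' connectedComponentIn T x ⊆
      connectedComponentIn S (x, (0:H)) := by
    intro x hx
    refine ((Continuous.prodMk continuous_id continuous_const).image_connectedComponentIn_subset
      hx).trans ?_
    exact connectedComponentIn_mono _ (by rintro y ⟨q, hq, rfl⟩; exact h3 q hq)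
  constructor
  · rintro ⟨q, hq, q', hq', hne, hcl, hcl'⟩
    refine ⟨q.1, h2 q hq, q'.1, h2 q' hq', ?_, ?_, ?_⟩
    · intro heq
      apply hne
      rw [hA q hq, hA q' hq']
      have hq1 : q'.1 ∈ connectedComponentIn T q.1 := heq ▸ mem_connectedComponentIn (h2 q' hq')
      have : ((q'.1, (0:H)) : G × H) ∈ connectedComponentIn S (q.1, (0:H)) :=
        hj q.1 (h2 q hq) ⟨q'.1, hq1, rfl⟩
      exact connectedComponentIn_eq this
    · have : s ∈ closure (Prod.fst '' connectedComponentIn S q) := by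
        have := image_closure_subset_closure_image (f := Prod.fst) continuous_fst
          (s := connectedComponentIn S q)
        exact this ⟨(s, (0:H)), hcl, rfl⟩
      exact closure_mono (hπ q hq) this
    · have : s ∈ closure (Prod.fst '' connectedComponentIn S q') := by
        have := image_closure_subset_closure_image (f := Prod.fst) continuous_fst
          (s := connectedComponentIn S q')
        exact this ⟨(s, (0:H)), hcl', rfl⟩
      exact closure_mono (hπ q' hq') this
  · rintro ⟨x, hx, x', hx', hne, hcl, hcl'⟩
    refine ⟨(x, 0), h3 x hx, (x', 0), h3 x' hx', ?_, ?_, ?_⟩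
    · intro heq
      apply hne
      have hx1 : ((x', (0:H)) : G × H) ∈ connectedComponentIn S (x, 0) :=
        heq ▸ mem_connectedComponentIn (h3 x' hx')
      have : x' ∈ connectedComponentIn T x := hπ (x, 0) (h3 x hx) ⟨(x', 0), hx1, rfl⟩
      exact connectedComponentIn_eq this
    · have : ((s, (0:H)) : G × H) ∈
          closure ((fun y : G => (y, (0:H))) '' connectedComponentIn T x) := by
        have := image_closure_subset_closure_image
          (f := fun y : G => (y, (0:H)))
          (Continuous.prodMk continuous_id continuous_const)
          (s := connectedComponentIn T x)
        exact this ⟨s, hcl, rfl⟩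
      exact closure_mono (hj x hx) this
    · have : ((s, (0:H)) : G × H) ∈
          closure ((fun y : G => (y, (0:H))) '' connectedComponentIn T x') := by
        have := image_closure_subset_closure_image
          (f := fun y : G => (y, (0:H)))
          (Continuous.prodMk continuous_id continuous_const)
          (s := connectedComponentIn T x')
        exact this ⟨s, hcl', rfl⟩
      exact closure_mono (hj x' hx') this

end Components

section Half

variable {E' : Type*} [NormedAddCommGroup E'] [NormedSpace ℝ E']

lemma fderiv_half (V : E' → ℝ) (hV : Differentiable ℝ V) (x : E') :
    fderiv ℝ (fun y => V y / 2) x = (2⁻¹ : ℝ) • fderiv ℝ V x := by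
  have : (fun y => V y / 2) = fun y => (2⁻¹ : ℝ) • V y := by
    funext y; simp [smul_eq_mul]; ring
  rw [this, fderiv_fun_const_smul (hV x)]

lemma hessianAt_half (V : E' → ℝ) (hV : ContDiff ℝ (⊤ : ℕ∞) V) (x : E') :
    hessianAt (fun y => V y / 2) x = (2⁻¹ : ℝ) • hessianAt V x := by
  have hd2 : Differentiable ℝ (fun y => fderiv ℝ V y) :=
    (hV.fderiv_right (m := 1) (WithTop.coe_le_coe.mpr le_top)).differentiable one_ne_zero
  unfold hessianAt
  have : (fun y => fderiv ℝ (fun z => V z / 2) y) = fun y => (2⁻¹ : ℝ) • fderiv ℝ V y := by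
    funext y; exact fderiv_half V (hV.differentiable (by simp)) y
  rw [this, fderiv_fun_const_smul (hd2 x)]

lemma hessianAt_half_apply (V : E' → ℝ) (hV : ContDiff ℝ (⊤ : ℕ∞) V) (x v w : E') :
    hessianAt (fun y => V y / 2) x v w = hessianAt V x v w / 2 := by
  rw [hessianAt_half V hV]
  simp [smul_eq_mul]
  ring

lemma morse_like_iff_of_half {F : Type*} [NormedAddCommGroup F] [NormedSpace ℝ F]
    (B C : F →L[ℝ] F →L[ℝ] ℝ) (h : ∀ v, C v v = B v v / 2) (k : ℕ) :
    ((∃ U : Submodule ℝ F, Module.finrank ℝ U = k ∧ ∀ v ∈ U, v ≠ 0 → C v v < 0) ∧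
      (∀ U : Submodule ℝ F, (∀ v ∈ U, v ≠ 0 → C v v < 0) → Module.finrank ℝ U ≤ k)) ↔
    ((∃ U : Submodule ℝ F, Module.finrank ℝ U = k ∧ ∀ v ∈ U, v ≠ 0 → B v v < 0) ∧
      (∀ U : Submodule ℝ F, (∀ v ∈ U, v ≠ 0 → B v v < 0) → Module.finrank ℝ U ≤ k)) := by
  have hiff : ∀ v : F, (C v v < 0 ↔ B v v < 0) := by
    intro v; rw [h v]; constructor <;> intro <;> linarith
  constructor
  · rintro ⟨⟨U, hk, hneg⟩, hb⟩
    exact ⟨⟨U, hk, fun v hv h0 => (hiff v).mp (hneg v hv h0)⟩,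
      fun U hneg => hb U (fun v hv h0 => (hiff v).mpr (hneg v hv h0))⟩
  · rintro ⟨⟨U, hk, hneg⟩, hb⟩
    exact ⟨⟨U, hk, fun v hv h0 => (hiff v).mpr (hneg v hv h0)⟩,
      fun U hneg => hb U (fun v hv h0 => (hiff v).mp (hneg v hv h0))⟩

end Half



/-- Let `V : ℝ^d → ℝ` be a smooth Morse function and
`W(x,v) = V(x)/2 + |v|²/4`. Then (i) the critical points of `W` are exactly the `(x,0)` with
`x` critical for `V`, and `(x,0)` is a nondegenerate critical point of `W` of index `1` iff
`x` is one for `V`; (ii) for `s` a nondegenerate index-`1` critical point of `V`, `(s,0)`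
lies in the closure of two distinct components of `{W < W(s,0)}` iff `s` lies in the closure
of two distinct components of `{V/2 < V(s)/2}`. In particular, the separating saddle points
of `W` are exactly the `(s,0)` with `s` a separating saddle point of `V/2`, and `W` and `V/2`
have the same separating saddle values. -/
theorem stmt_8 (d : ℕ) (hd : 1 ≤ d)
    (V : EuclideanSpace ℝ (Fin d) → ℝ) (hV : ContDiff ℝ (⊤ : ℕ∞) V)
    (hMorse : ∀ x, fderiv ℝ V x = 0 → ∀ v, (∀ w, hessianAt V x v w = 0) → v = 0)
    (W : EuclideanSpace ℝ (Fin d) × EuclideanSpace ℝ (Fin d) → ℝ)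
    (hW : ∀ x v, W (x, v) = V x / 2 + ‖v‖ ^ 2 / 4) :
    (∀ p : EuclideanSpace ℝ (Fin d) × EuclideanSpace ℝ (Fin d),
      fderiv ℝ W p = 0 ↔ (p.2 = 0 ∧ fderiv ℝ V p.1 = 0)) ∧
    (∀ x : EuclideanSpace ℝ (Fin d),
      (IsNondegenerateCriticalPt W (x, 0) ∧ HasMorseIndex W (x, 0) 1) ↔
      (IsNondegenerateCriticalPt V x ∧ HasMorseIndex V x 1)) ∧
    (∀ s : EuclideanSpace ℝ (Fin d),
      IsNondegenerateCriticalPt V s → HasMorseIndex V s 1 →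
      (InClosureOfTwoComponents {q | W q < W (s, 0)} (s, 0) ↔
       InClosureOfTwoComponents {x | V x / 2 < V s / 2} s)) ∧
    (∀ p : EuclideanSpace ℝ (Fin d) × EuclideanSpace ℝ (Fin d),
      IsSepSaddle W p ↔ ∃ s, p = (s, 0) ∧ IsSepSaddle (fun x => V x / 2) s) ∧
    ({σ : ℝ | ∃ p, IsSepSaddle W p ∧ W p = σ} =
     {σ : ℝ | ∃ s, IsSepSaddle (fun x => V x / 2) s ∧ V s / 2 = σ}) := by
  have hdiff : Differentiable ℝ V := hV.differentiable (by simp)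
  -- part (i)
  have part1 : ∀ p : EuclideanSpace ℝ (Fin d) × EuclideanSpace ℝ (Fin d),
      fderiv ℝ W p = 0 ↔ (p.2 = 0 ∧ fderiv ℝ V p.1 = 0) := by
    intro p
    have hfd : fderiv ℝ W p = DW V p.1 p.2 := (hasFDerivAt_W V hdiff W hW p.1 p.2).fderiv
    rw [hfd]
    constructor
    · intro h
      have hv : ∀ w, DW V p.1 p.2 w = 0 := fun w => by rw [h]; rfl
      constructor
      · have h2 := hv (0, p.2)
        rw [DW_apply] at h2
        simp only [map_zero, zero_div, zero_add] at h2
        have h4 : (inner ℝ p.2 p.2 : ℝ) = 0 := by linarith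
        exact inner_self_eq_zero.mp h4
      · apply ContinuousLinearMap.ext
        intro w
        have h3 := hv (w, 0)
        rw [DW_apply] at h3
        simp at h3
        simpa using h3
    · rintro ⟨h2, h1⟩
      apply ContinuousLinearMap.ext
      rintro ⟨c, e⟩
      rw [DW_apply]
      simp [h1, h2]
  have hhess : ∀ (x v a b c e : EuclideanSpace ℝ (Fin d)),
      hessianAt W (x, v) (a, b) (c, e) = hessianAt V x a c / 2 + (inner ℝ b e : ℝ) / 2 :=
    fun x v a b c e => hessianAt_W V hV W hW x v a b c e
  -- nondegeneracy transfer
  have nondeg_iff : ∀ x, IsNondegenerateCriticalPt W (x, 0) ↔ IsNondegenerateCriticalPt V x := by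
    intro x
    constructor
    · rintro ⟨h0, hker⟩
      have h01 := (part1 (x, 0)).mp h0
      refine ⟨h01.2, ?_⟩
      intro v hv
      have h := hker (v, 0) ?_
      · exact congrArg Prod.fst h
      · rintro ⟨c, e⟩
        rw [hhess x 0 v 0 c e]
        simp [hv c]
    · rintro ⟨h0, hker⟩
      refine ⟨(part1 (x, 0)).mpr ⟨rfl, h0⟩, ?_⟩
      rintro ⟨a, b⟩ hab
      have hb : b = 0 := by
        have h := hab (0, b)
        rw [hhess x 0 a b 0 b] at h
        simp only [map_zero, zero_div, zero_add] at h
        have h4 : (inner ℝ b b : ℝ) = 0 := by linarith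
        exact inner_self_eq_zero.mp h4
      have ha : a = 0 := by
        apply hker
        intro w
        have h := hab (w, 0)
        rw [hhess x 0 a b w 0] at h
        simp at h
        exact h
      simp [ha, hb]
  -- Morse index transfer
  have index_iff : ∀ x, HasMorseIndex W (x, 0) 1 ↔ HasMorseIndex V x 1 := by
    intro x
    exact morse_index_prod_iff (hessianAt V x) (hessianAt W (x, 0))
      (fun a b c e => hhess x 0 a b c e) 1
  -- halving transfer
  have nondeg_half : ∀ x, IsNondegenerateCriticalPt (fun y => V y / 2) x ↔
      IsNondegenerateCriticalPt V x := by
    intro x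
    unfold IsNondegenerateCriticalPt
    rw [fderiv_half V hdiff x]
    constructor
    · rintro ⟨h0, hker⟩
      constructor
      · have := congrArg (fun g => (2 : ℝ) • g) h0
        simpa [smul_smul] using this
      · intro v hv
        refine hker v (fun w => ?_)
        rw [hessianAt_half_apply V hV x v w, hv w]
        norm_num
    · rintro ⟨h0, hker⟩
      refine ⟨by rw [h0]; simp, ?_⟩
      intro v hv
      apply hker v
      intro w
      have h := hv w
      rw [hessianAt_half_apply V hV x v w] at h
      linarith
  have index_half : ∀ x, HasMorseIndex (fun y => V y / 2) x 1 ↔ HasMorseIndex V x 1 := by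
    intro x
    exact morse_like_iff_of_half (hessianAt V x) (hessianAt (fun y => V y / 2) x)
      (fun v => hessianAt_half_apply V hV x v v) 1
  -- components transfer
  have hWval : ∀ s, W (s, 0) = V s / 2 := by
    intro s; rw [hW]; simp
  have comp_iff : ∀ s : EuclideanSpace ℝ (Fin d),
      InClosureOfTwoComponents {q | W q < W (s, 0)} (s, 0) ↔
      InClosureOfTwoComponents {x | V x / 2 < V s / 2} s := by
    intro s
    apply components_iff
    · rintro ⟨x, v⟩ hp t ht
      have hx : W (x, v) < W (s, 0) := hp
      rw [hW, hWval] at hx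
      show W (x, t • v) < W (s, 0)
      rw [hW, hWval]
      have hnorm : ‖t • v‖ ^ 2 ≤ ‖v‖ ^ 2 := by
        rw [norm_smul, Real.norm_eq_abs]
        have h1 : |t| ≤ 1 := abs_le.mpr ⟨by linarith [ht.1], ht.2⟩
        have h2 : (0 : ℝ) ≤ |t| := abs_nonneg t
        have h3 : |t| * |t| ≤ 1 := by nlinarith
        have h4 := mul_le_mul_of_nonneg_right h3 (mul_self_nonneg ‖v‖)
        calc (|t| * ‖v‖) ^ 2 = (|t| * |t|) * (‖v‖ * ‖v‖) := by ring
          _ ≤ 1 * (‖v‖ * ‖v‖) := h4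
          _ = ‖v‖ ^ 2 := by ring
      linarith
    · rintro ⟨x, v⟩ hp
      have hx : W (x, v) < W (s, 0) := hp
      rw [hW, hWval] at hx
      show V x / 2 < V s / 2
      nlinarith [sq_nonneg ‖v‖]
    · intro x hx
      have hx' : V x / 2 < V s / 2 := hx
      show W (x, 0) < W (s, 0)
      rw [hWval, hWval]
      exact hx'
  -- part (iv)
  have part4 : ∀ p : EuclideanSpace ℝ (Fin d) × EuclideanSpace ℝ (Fin d),
      IsSepSaddle W p ↔ ∃ s, p = (s, 0) ∧ IsSepSaddle (fun x => V x / 2) s := by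
    rintro ⟨x, v⟩
    constructor
    · rintro ⟨⟨h0, hker⟩, hidx, hcl⟩
      obtain ⟨hp2, hp1⟩ := (part1 (x, v)).mp h0
      have hv0 : v = 0 := hp2
      subst hv0
      refine ⟨x, rfl, ?_, ?_, ?_⟩
      · exact (nondeg_half x).mpr ((nondeg_iff x).mp ⟨h0, hker⟩)
      · exact (index_half x).mpr ((index_iff x).mp hidx)
      · exact (comp_iff x).mp hcl
    · rintro ⟨s, hps, ⟨h0, hker⟩, hidx, hcl⟩
      rw [hps]
      refine ⟨?_, ?_, ?_⟩
      · exact (nondeg_iff s).mpr ((nondeg_half s).mp ⟨h0, hker⟩)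
      · exact (index_iff s).mpr ((index_half s).mp hidx)
      · exact (comp_iff s).mpr hcl
  refine ⟨part1, ?_, ?_, part4, ?_⟩
  · intro x
    constructor
    · rintro ⟨hn, hi⟩
      exact ⟨(nondeg_iff x).mp hn, (index_iff x).mp hi⟩
    · rintro ⟨hn, hi⟩
      exact ⟨(nondeg_iff x).mpr hn, (index_iff x).mpr hi⟩
  · intro s _ _
    exact comp_iff s
  · ext σ
    simp only [Set.mem_setOf_eq]
    constructor
    · rintro ⟨p, hp, rfl⟩
      obtain ⟨s, rfl, hs⟩ := (part4 p).mp hp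
      exact ⟨s, hs, (hWval s).symm⟩
    · rintro ⟨s, hs, rfl⟩
      exact ⟨(s, 0), (part4 (s, 0)).mpr ⟨s, rfl, hs⟩, hWval s⟩
end
end

section
/- Let d ≥ 1 and let V : ℝ^d → ℝ be continuous. Define W : ℝ^{2d} → ℝ by W(x,v) = V(x)/2 + |v|²/4 and let π : ℝ^{2d} → ℝ^d be the projection π(x,v) = x. Then for every σ ∈ ℝ, every connected component Ẽ of {W < σ}, and every m ∈ ℝ^d with (m,0) ∈ Ẽ: the point (m,0) is a global minimum of the restriction of W to Ẽ if and only if m is a global minimum of the restriction of V to π(Ẽ). -/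
/-- Let `V : ℝ^d → ℝ` be continuous, `W(x,v) = V(x)/2 + |v|²/4` on `ℝ^{2d}`,
and `π(x,v) = x`. For every `σ ∈ ℝ`, every connected component `Ẽ` of `{W < σ}` and every
`m` with `(m,0) ∈ Ẽ`: the point `(m,0)` is a global minimum of `W` restricted to `Ẽ` iff `m`
is a global minimum of `V` restricted to `π(Ẽ)`. -/
theorem stmt_9 (d : ℕ) (hd : 1 ≤ d)
    (V : EuclideanSpace ℝ (Fin d) → ℝ) (hV : Continuous V)
    (W : EuclideanSpace ℝ (Fin d) × EuclideanSpace ℝ (Fin d) → ℝ)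
    (hW : ∀ x v, W (x, v) = V x / 2 + ‖v‖ ^ 2 / 4)
    (σ : ℝ)
    (Et : Set (EuclideanSpace ℝ (Fin d) × EuclideanSpace ℝ (Fin d)))
    (hEt : ∃ p, W p < σ ∧ Et = connectedComponentIn {q | W q < σ} p)
    (m : EuclideanSpace ℝ (Fin d))
    (hm : (m, (0 : EuclideanSpace ℝ (Fin d))) ∈ Et) :
    (∀ q ∈ Et, W (m, (0 : EuclideanSpace ℝ (Fin d))) ≤ W q) ↔
    (∀ x ∈ Prod.fst '' Et, V m ≤ V x) := by
  obtain ⟨p, hp, rfl⟩ := hEt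
  set S : Set (EuclideanSpace ℝ (Fin d) × EuclideanSpace ℝ (Fin d)) := {q | W q < σ} with hS
  -- key: if (x,v) in the component, then (x,0) is too
  have key : ∀ q ∈ connectedComponentIn S p, (q.1, (0 : EuclideanSpace ℝ (Fin d)))
      ∈ connectedComponentIn S p := by
    rintro ⟨x, v⟩ hq
    set C : Set (EuclideanSpace ℝ (Fin d) × EuclideanSpace ℝ (Fin d)) :=
      (fun t : ℝ => (x, t • v)) '' Set.Icc 0 1 with hC
    have hCpre : IsPreconnected C := by
      apply (isPreconnected_Icc).image
      exact (Continuous.prodMk continuous_const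
        (continuous_id.smul continuous_const)).continuousOn
    have hCS : C ⊆ S := by
      rintro _ ⟨t, ht, rfl⟩
      have hq' : W (x, v) < σ := connectedComponentIn_subset S p hq
      rw [hS, Set.mem_setOf_eq, hW]
      rw [hW] at hq'
      have hnorm : ‖t • v‖ ^ 2 ≤ ‖v‖ ^ 2 := by
        have : ‖t • v‖ ≤ ‖v‖ := by
          rw [norm_smul, Real.norm_eq_abs, abs_of_nonneg ht.1]
          nlinarith [norm_nonneg v, ht.2]
        nlinarith [norm_nonneg (t • v)]
      linarith
    have hqC : ((x, v) : _) ∈ C := ⟨1, Set.right_mem_Icc.mpr zero_le_one, by simp⟩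
    have h0C : ((x, (0 : EuclideanSpace ℝ (Fin d))) : _) ∈ C :=
      ⟨0, Set.left_mem_Icc.mpr zero_le_one, by simp⟩
    have hsub := hCpre.subset_connectedComponentIn hqC hCS
    have heq := connectedComponentIn_eq hq
    rw [heq]
    exact hsub h0C
  constructor
  · rintro h x ⟨⟨x', v⟩, hxv, rfl⟩
    have h0 := key _ hxv
    have := h _ h0
    rw [hW, hW] at this
    simp only [norm_zero] at this
    linarith
  · rintro h ⟨x, v⟩ hq
    have hx : x ∈ Prod.fst '' connectedComponentIn S p := ⟨(x, v), hq, rfl⟩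
    have := h x hx
    rw [hW, hW]
    simp only [norm_zero]
    nlinarith [norm_nonneg v]
end

section
/- Let d ≥ 1, τ > 0, and let f be a holomorphic function on the open polydisc D(0,τ)^d = {z ∈ ℂ^d : |z_j| < τ for all j} such that f is real-valued on (−τ,τ)^d ⊂ ℝ^d and f is even, i.e. f(η) = f(−η) for all η ∈ D(0,τ)^d. Then for every multi-index β ∈ ℕ^d and every ψ ∈ ℝ^d with |ψ_j| < τ for all j, one has i^{−|β|} ∂^β f(iψ) ∈ ℝ, i.e. ∂^β f(iψ) ∈ i^{|β|} ℝ. -/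
/-!
Realness on real points gives, by the one-variable identity theorem applied one coordinate at a
time, the Schwarz reflection `f z = conj (f (star z))` on the polydisc. Combined with evenness this
is `f = conj ∘ f ∘ ρ` for the conjugate-linear involution `ρ z = -star z`, which fixes `iψ` and
sends each real basis vector `e_j` to `-e_j`. Differentiating `n` times, `w = ∂^β f(iψ)` satisfies
`w = conj ((-1)^n w)`, that is `w ∈ iⁿ ℝ`.
-/

open ComplexConjugate Metric Set Filter Topology

universe u

noncomputable section

namespace ContinuousLinearMap

variable {E F : Type*} [NormedAddCommGroup E] [NormedSpace ℂ E] [NormedAddCommGroup F]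
  [NormedSpace ℂ F]

def conjugate (σE : E →L⋆[ℂ] E) (σF : F →L⋆[ℂ] F) : (E →L[ℂ] F) →L⋆[ℂ] (E →L[ℂ] F) :=
  LinearMap.mkContinuous
    { toFun := fun L => σF.comp (L.comp σE)
      map_add' := fun _ _ => by ext; simp
      map_smul' := fun _ _ => by ext; simp }
    (‖σF‖ * ‖σE‖) fun L =>
      calc ‖σF.comp (L.comp σE)‖ ≤ ‖σF‖ * (‖L‖ * ‖σE‖) :=
            (opNorm_comp_le _ _).trans (by gcongr; exact opNorm_comp_le _ _)
        _ = ‖σF‖ * ‖σE‖ * ‖L‖ := by ring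

@[simp]
theorem conjugate_apply (σE : E →L⋆[ℂ] E) (σF : F →L⋆[ℂ] F) (L : E →L[ℂ] F) (v : E) :
    conjugate σE σF L v = σF (L (σE v)) := rfl

theorem conjugate_involutive {σE : E →L⋆[ℂ] E} {σF : F →L⋆[ℂ] F}
    (hσE : Function.Involutive σE) (hσF : Function.Involutive σF) :
    Function.Involutive (conjugate σE σF) := fun L => by
  ext v; simp [hσE v, hσF _]

def toRealCLM (σ : E →L⋆[ℂ] F) : E →L[ℝ] F :=
  σ.toLinearMap.toAddMonoidHom.toRealLinearMap σ.continuous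

end ContinuousLinearMap

open ContinuousLinearMap

section Conjugation

variable {E F : Type*} [NormedAddCommGroup E] [NormedSpace ℂ E] [NormedAddCommGroup F]
  [NormedSpace ℂ F] {σE : E →L⋆[ℂ] E} {σF : F →L⋆[ℂ] F}

theorem HasFDerivAt.conjugate {B : E → F} {L : E →L[ℂ] F} {z : E}
    (h : HasFDerivAt B L (σE z)) :
    HasFDerivAt (fun w => σF (B (σE w))) (conjugate σE σF L) z :=
  hasFDerivAt_of_restrictScalars ℝ
    (σF.toRealCLM.hasFDerivAt.comp z ((h.restrictScalars ℝ).comp z σE.toRealCLM.hasFDerivAt))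
    (by ext; rfl)

theorem fderiv_conjugate (hσE : Function.Involutive σE) (hσF : Function.Involutive σF)
    (B : E → F) (z : E) :
    fderiv ℂ (fun w => σF (B (σE w))) z = conjugate σE σF (fderiv ℂ B (σE z)) := by
  by_cases hB : DifferentiableAt ℂ B (σE z)
  · exact hB.hasFDerivAt.conjugate.fderiv
  · have hB' : ¬ DifferentiableAt ℂ (fun w => σF (B (σE w))) z := fun h => by
      rw [← hσE z] at h
      have := (h.hasFDerivAt.conjugate (σE := σE) (σF := σF)).differentiableAt
      simp only [hσE _, hσF _] at this
      exact hB this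
    rw [fderiv_zero_of_not_differentiableAt hB, fderiv_zero_of_not_differentiableAt hB', map_zero]

theorem fderiv_eq_conjugate_of_eqOn (hσE : Function.Involutive σE)
    (hσF : Function.Involutive σF) {U : Set E} (hU : IsOpen U) {B : E → F}
    (hB : ∀ z ∈ U, B z = σF (B (σE z))) :
    ∀ z ∈ U, fderiv ℂ B z = conjugate σE σF (fderiv ℂ B (σE z)) := fun z hz => by
  rw [← fderiv_conjugate hσE hσF]
  exact (eventuallyEq_of_mem (hU.mem_nhds hz) hB).fderiv_eq

end Conjugation

-- `E` and `F` share a universe so that the induction can pass to `F := E →L[ℂ] F`.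
theorem iteratedFDeriv_eq_conj_of_eqOn {E : Type u} [NormedAddCommGroup E]
    [NormedSpace ℂ E] {σE : E →L⋆[ℂ] E} (hσE : Function.Involutive σE) {U : Set E}
    (hU : IsOpen U) (n : ℕ) {F : Type u} [NormedAddCommGroup F] [NormedSpace ℂ F]
    {σF : F →L⋆[ℂ] F} (hσF : Function.Involutive σF) {B : E → F}
    (hB : ∀ z ∈ U, B z = σF (B (σE z))) {z : E} (hz : z ∈ U) (v : Fin n → E) :
    iteratedFDeriv ℂ n B z v = σF (iteratedFDeriv ℂ n B (σE z) (σE ∘ v)) := by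
  induction n generalizing F with
  | zero => simpa only [iteratedFDeriv_zero_apply] using hB z hz
  | succ n ih =>
    have h := ih (F := E →L[ℂ] F) (conjugate_involutive hσE hσF)
      (fderiv_eq_conjugate_of_eqOn hσE hσF hU hB) (Fin.init v)
    rw [iteratedFDeriv_succ_apply_right, iteratedFDeriv_succ_apply_right, h]
    rfl

section IdentityTheorem

variable {E : Type*} [NormedAddCommGroup E] [NormedSpace ℂ E] [CompleteSpace E]

theorem DifferentiableOn.eqOn_zero_of_forall_ofReal {g : ℂ → E} {r : ℝ}
    (hg : DifferentiableOn ℂ g (ball 0 r)) (hreal : ∀ x : ℝ, |x| < r → g x = 0) :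
    EqOn g 0 (ball 0 r) := by
  rcases le_or_gt r 0 with hr | hr
  · simp [ball_eq_empty.2 hr]
  have hofReal : Tendsto ((↑) : ℝ → ℂ) (𝓝[≠] 0) (𝓝[≠] 0) :=
    tendsto_nhdsWithin_of_tendsto_nhds_of_eventually_within _
      (Complex.continuous_ofReal.tendsto' 0 0 Complex.ofReal_zero |>.mono_left nhdsWithin_le_nhds)
      (eventually_nhdsWithin_of_forall fun x hx => by simpa using hx)
  have hnear : ∀ᶠ x : ℝ in 𝓝[≠] 0, g x = 0 :=
    (eventually_nhdsWithin_of_eventually_nhds (isOpen_ball.mem_nhds (mem_ball_self hr))).mono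
      fun x hx => hreal x (by simpa using hx)
  exact (hg.analyticOnNhd isOpen_ball).eqOn_zero_of_preconnected_of_frequently_eq_zero
    (convex_ball 0 r).isPreconnected (mem_ball_self hr) (hofReal.frequently hnear.frequently)

theorem DifferentiableOn.eqOn_zero_of_forall_im_eq_zero {ι : Type*} [Fintype ι]
    {H : (ι → ℂ) → E} {r : ℝ} (hH : DifferentiableOn ℂ H (ball 0 r))
    (hreal : ∀ z ∈ ball (0 : ι → ℂ) r, (∀ j, (z j).im = 0) → H z = 0) :
    EqOn H 0 (ball 0 r) := by
  classical
  suffices ∀ s : Finset ι, ∀ z ∈ ball (0 : ι → ℂ) r, (∀ j ∉ s, (z j).im = 0) → H z = 0 from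
    fun z hz => this Finset.univ z hz (by simp)
  intro s
  induction s using Finset.induction_on with
  | empty => simpa using hreal
  | insert a s _ ih =>
    intro z hz hzs
    have hr : 0 < r := (norm_nonneg z).trans_lt (mem_ball_zero_iff.1 hz)
    have hupdate : ∀ w ∈ ball (0 : ℂ) r, Function.update z a w ∈ ball 0 r := fun w hw => by
      rw [mem_ball_zero_iff, pi_norm_lt_iff hr] at hz ⊢
      intro j
      rcases eq_or_ne j a with rfl | hja
      · simpa using hw
      · simpa [hja] using hz j
    have hslice : EqOn (fun w => H (Function.update z a w)) 0 (ball 0 r) := by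
      refine DifferentiableOn.eqOn_zero_of_forall_ofReal
        (hH.comp (fun w _ => (hasFDerivAt_update z w).differentiableAt.differentiableWithinAt)
          hupdate)
        fun x hx => ih _ (hupdate x (by simpa using hx)) fun j hj => ?_
      rcases eq_or_ne j a with rfl | hja
      · simp
      · simpa [hja] using hzs j (by simp [hja, hj])
    have hza : z a ∈ ball (0 : ℂ) r :=
      mem_ball_zero_iff.2 ((norm_le_pi_norm z a).trans_lt (mem_ball_zero_iff.1 hz))
    simpa using hslice hza

end IdentityTheorem

theorem DifferentiableOn.eq_conj_apply_star {ι : Type*} [Fintype ι] {f : (ι → ℂ) → ℂ} {r : ℝ}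
    (hf : DifferentiableOn ℂ f (ball 0 r))
    (hreal : ∀ z ∈ ball (0 : ι → ℂ) r, (∀ j, (z j).im = 0) → (f z).im = 0) :
    ∀ z ∈ ball (0 : ι → ℂ) r, f z = conj (f (star z)) := by
  have hstar : ∀ z ∈ ball (0 : ι → ℂ) r, star z ∈ ball 0 r := fun z hz => by
    simpa [mem_ball_zero_iff, norm_star] using hz
  have hreflect : DifferentiableOn ℂ (fun z => conj (f (star z))) (ball 0 r) := fun z hz =>
    have hdiff := (hf _ (hstar z hz)).differentiableAt (isOpen_ball.mem_nhds (hstar z hz))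
    (HasFDerivAt.conjugate (σE := (starL ℂ : (ι → ℂ) ≃L⋆[ℂ] (ι → ℂ)))
      (σF := (starL ℂ : ℂ ≃L⋆[ℂ] ℂ)) (z := z)
      hdiff.hasFDerivAt).differentiableAt.differentiableWithinAt
  intro z hz
  refine sub_eq_zero.1 ((hf.sub hreflect).eqOn_zero_of_forall_im_eq_zero (fun z _ hz => ?_) hz)
  have hz' : star z = z := funext fun j => Complex.conj_eq_iff_im.2 (hz j)
  simp [hz', Complex.conj_eq_iff_im.2 (hreal z ‹_› hz)]

theorem Complex.exists_eq_I_pow_mul_ofReal {w : ℂ} {n : ℕ} (h : conj w = (-1) ^ n * w) :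
    ∃ t : ℝ, w = Complex.I ^ n * t := by
  have hconj : conj (w / Complex.I ^ n) = w / Complex.I ^ n := by
    rw [map_div₀, h, map_pow, Complex.conj_I, neg_pow Complex.I,
      mul_div_mul_left _ _ (pow_ne_zero n (by norm_num))]
  refine ⟨(w / Complex.I ^ n).re, ?_⟩
  rw [Complex.conj_eq_iff_re.1 hconj, mul_div_cancel₀ _ (pow_ne_zero n Complex.I_ne_zero)]

end

theorem stmt_12_general (d : ℕ) (τ : ℝ) (hτ : 0 < τ)
    (f : (Fin d → ℂ) → ℂ)
    (hf : DifferentiableOn ℂ f {z : Fin d → ℂ | ∀ j, ‖z j‖ < τ})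
    (hreal : ∀ x : Fin d → ℝ, (∀ j, |x j| < τ) → (f (fun j => (x j : ℂ))).im = 0)
    (heven : ∀ z : Fin d → ℂ, (∀ j, ‖z j‖ < τ) → f (-z) = f z)
    (n : ℕ) (m : Fin n → Fin d) (ψ : Fin d → ℝ) (hψ : ∀ j, |ψ j| < τ) :
    ∃ t : ℝ, iteratedFDeriv ℂ n f (fun j => (ψ j : ℂ) * Complex.I)
        (fun k => Pi.single (m k) 1) = Complex.I ^ n * t := by
  have hball : {z : Fin d → ℂ | ∀ j, ‖z j‖ < τ} = ball 0 τ := by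
    ext z; simp [pi_norm_lt_iff hτ]
  rw [hball] at hf
  have hschwarz := hf.eq_conj_apply_star fun z hz hzre => by
    rw [show z = fun j => ((z j).re : ℂ) from funext fun j => Complex.ext rfl (by simp [hzre j])]
    exact hreal _ fun j => (Complex.abs_re_le_norm _).trans_lt
      ((norm_le_pi_norm z j).trans_lt (mem_ball_zero_iff.1 hz))
  set ρ : (Fin d → ℂ) →L⋆[ℂ] (Fin d → ℂ) := -(starL ℂ : (Fin d → ℂ) ≃L⋆[ℂ] (Fin d → ℂ))
  have hρ : Function.Involutive ρ := fun z => by simp [ρ]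
  have hreflect : ∀ z ∈ ball (0 : Fin d → ℂ) τ,
      f z = ((starL ℂ : ℂ ≃L⋆[ℂ] ℂ) : ℂ →L⋆[ℂ] ℂ) (f (ρ z)) := fun z hz => by
    have hstar : star z ∈ {z : Fin d → ℂ | ∀ j, ‖z j‖ < τ} := hball ▸ by simpa [norm_star] using hz
    simpa [ρ, heven _ hstar] using hschwarz z hz
  set z₀ : Fin d → ℂ := fun j => (ψ j : ℂ) * Complex.I
  have hz₀ : z₀ ∈ ball 0 τ := by simpa [mem_ball_zero_iff, pi_norm_lt_iff hτ, z₀] using hψ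
  have hρz₀ : ρ z₀ = z₀ := funext fun j => by simp [ρ, z₀]
  set e : Fin n → Fin d → ℂ := fun k => Pi.single (m k) 1
  have hρe : ρ ∘ e = fun k => (-1 : ℂ) • e k := funext fun k => by simp [ρ, e]
  have key := iteratedFDeriv_eq_conj_of_eqOn (F := ℂ) (B := f)
    (σF := (starL ℂ : ℂ ≃L⋆[ℂ] ℂ)) hρ isOpen_ball n star_involutive hreflect hz₀ e
  rw [hρz₀, hρe, ContinuousMultilinearMap.map_smul_univ] at key
  apply Complex.exists_eq_I_pow_mul_ofReal
  conv_lhs => rw [key]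
  simp

/-- Let `f` be holomorphic on the open polydisc `D(0,τ)^d ⊆ ℂ^d`,
real-valued on real points and even. Then for every multi-index (encoded by a choice of `n`
coordinate directions `m : Fin n → Fin d`) and every real point `ψ` of the polydisc, the
corresponding partial derivative of `f` at the purely imaginary point `iψ` lies in `i^n ℝ`. -/
theorem stmt_12 (d : ℕ) (hd : 1 ≤ d) (τ : ℝ) (hτ : 0 < τ)
    (f : (Fin d → ℂ) → ℂ)
    (hf : DifferentiableOn ℂ f {z : Fin d → ℂ | ∀ j, ‖z j‖ < τ})
    (hreal : ∀ x : Fin d → ℝ, (∀ j, |x j| < τ) → (f (fun j => (x j : ℂ))).im = 0)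
    (heven : ∀ z : Fin d → ℂ, (∀ j, ‖z j‖ < τ) → f (-z) = f z)
    (n : ℕ) (m : Fin n → Fin d) (ψ : Fin d → ℝ) (hψ : ∀ j, |ψ j| < τ) :
    ∃ t : ℝ, iteratedFDeriv ℂ n f (fun j => (ψ j : ℂ) * Complex.I)
        (fun k => Pi.single (m k) 1) = Complex.I ^ n * t :=
  stmt_12_general d τ hτ f hf hreal heven n m ψ hψ
end

section
/- From L^∞ expansions of all derivatives to a C^∞ expansion: let K ⊂ ℝ^{d'} be a compact convex set with nonempty interior, and let (a_h)_{h∈(0,1]} be a family of smooth functions on a neighborhood of K such that for every multi-index β there exist h-independent smooth functions (a_{β,j})_{j≥0} on K with sup_K |∂^β a_h − Σ_{j=0}^{N−1} h^j a_{β,j}| ≤ C_{β,N} h^N for all N ∈ ℕ and h ∈ (0,1]. Then for all β and j one has a_{β,j} = ∂^β a_{0,j} on K; consequently a_h ∼ Σ_{j≥0} h^j a_{0,j} is a classical expansion in C^∞(K). -/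
/-- Partial derivative of `f` in the `i`-th coordinate direction. -/
noncomputable def pderivAlong {d' : ℕ} (i : Fin d')
    (f : EuclideanSpace ℝ (Fin d') → ℝ) : EuclideanSpace ℝ (Fin d') → ℝ :=
  fun x => fderiv ℝ f x (EuclideanSpace.single i 1)

/-- Iterated partial derivative `∂^β f` along the multi-index encoded by the list `l`. -/
noncomputable def pderivList {d' : ℕ} :
    List (Fin d') → (EuclideanSpace ℝ (Fin d') → ℝ) → (EuclideanSpace ℝ (Fin d') → ℝ)
  | [], f => f
  | i :: l, f => pderivAlong i (pderivList l f)

lemma contDiffOn_pderivList {d' : ℕ} {U : Set (EuclideanSpace ℝ (Fin d'))}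
    (hU : IsOpen U) {f : EuclideanSpace ℝ (Fin d') → ℝ}
    (hf : ContDiffOn ℝ (⊤ : ℕ∞) f U) : ∀ l, ContDiffOn ℝ (⊤ : ℕ∞) (pderivList l f) U := by
  intro l
  induction l with
  | nil => exact hf
  | cons i l ih =>
    have h1 : ContDiffOn ℝ (⊤ : ℕ∞) (fderiv ℝ (pderivList l f)) U :=
      ih.fderiv_of_isOpen hU (by simp)
    exact h1.clm_apply contDiffOn_const

lemma coeff_zero (d : ℕ → ℝ)
    (hd : ∀ N, ∃ C, ∀ h ∈ Set.Ioc (0:ℝ) 1, |∑ j ∈ Finset.range N, h ^ j * d j| ≤ C * h ^ N) :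
    ∀ j, d j = 0 := by
  intro j
  induction j using Nat.strong_induction_on with
  | _ j ih =>
    obtain ⟨C, hC⟩ := hd (j + 1)
    have key : ∀ h ∈ Set.Ioc (0:ℝ) 1, |d j| ≤ C * h := by
      intro h hh
      have hsum : ∑ k ∈ Finset.range (j + 1), h ^ k * d k = h ^ j * d j := by
        rw [Finset.sum_range_succ]
        have : ∀ k ∈ Finset.range j, h ^ k * d k = 0 := by
          intro k hk
          rw [ih k (Finset.mem_range.1 hk), mul_zero]
        rw [Finset.sum_eq_zero this, zero_add]
      have := hC h hh
      rw [hsum, abs_mul, abs_pow, abs_of_pos hh.1, pow_succ] at this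
      have hpow : (0:ℝ) < h ^ j := pow_pos hh.1 j
      exact le_of_mul_le_mul_left (by nlinarith) hpow
    have hle : |d j| ≤ 0 := by
      have htend : Filter.Tendsto (fun h : ℝ => C * h) (nhdsWithin 0 (Set.Ioc 0 1)) (nhds 0) := by
        have : Filter.Tendsto (fun h : ℝ => C * h) (nhds 0) (nhds (C * 0)) :=
          (continuous_const.mul continuous_id).tendsto 0
        rw [mul_zero] at this
        exact this.mono_left nhdsWithin_le_nhds
      have hne : (nhdsWithin (0:ℝ) (Set.Ioc 0 1)).NeBot := by
        apply mem_closure_iff_nhdsWithin_neBot.1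
        have : (0:ℝ) ∈ closure (Set.Ioc (0:ℝ) 1) := by
          rw [closure_Ioc (by norm_num : (0:ℝ) ≠ 1)]
          exact ⟨le_refl 0, by norm_num⟩
        exact this
      exact ge_of_tendsto htend (eventually_nhdsWithin_of_forall key)
    exact abs_nonpos_iff.1 hle

lemma hasDerivAt_line {d' : ℕ} (f : EuclideanSpace ℝ (Fin d') → ℝ)
    (x v : EuclideanSpace ℝ (Fin d')) (t : ℝ)
    (hf : DifferentiableAt ℝ f (x + t • v)) :
    HasDerivAt (fun s : ℝ => f (x + s • v)) (fderiv ℝ f (x + t • v) v) t := by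
  have h1 : HasDerivAt (fun s : ℝ => x + s • v) v t := by
    simpa using ((hasDerivAt_id t).smul_const v).const_add x
  exact hf.hasFDerivAt.comp_hasDerivAt t h1

lemma contOn_pderivAlong {d' : ℕ} {U : Set (EuclideanSpace ℝ (Fin d'))}
    (hU : IsOpen U) {g : EuclideanSpace ℝ (Fin d') → ℝ}
    (hg : ContDiffOn ℝ (⊤ : ℕ∞) g U) (i : Fin d') : ContinuousOn (pderivAlong i g) U := by
  have h1 : ContDiffOn ℝ (⊤ : ℕ∞) (fderiv ℝ g) U := hg.fderiv_of_isOpen hU (by simp)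
  exact (h1.clm_apply contDiffOn_const).continuousOn

lemma lineFTC {d' : ℕ} {U : Set (EuclideanSpace ℝ (Fin d'))}
    (hU : IsOpen U) {g : EuclideanSpace ℝ (Fin d') → ℝ}
    (hg : ContDiffOn ℝ (⊤ : ℕ∞) g U) (i : Fin d') (x : EuclideanSpace ℝ (Fin d')) (t : ℝ)
    (hseg : ∀ s ∈ Set.uIcc (0:ℝ) t,
      x + s • (EuclideanSpace.single i 1 : EuclideanSpace ℝ (Fin d')) ∈ U) :
    ∫ s in (0:ℝ)..t,
        pderivAlong i g (x + s • (EuclideanSpace.single i 1 : EuclideanSpace ℝ (Fin d')))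
      = g (x + t • (EuclideanSpace.single i 1 : EuclideanSpace ℝ (Fin d'))) - g x := by
  set e : EuclideanSpace ℝ (Fin d') := EuclideanSpace.single i 1 with he
  have hline : Continuous (fun s : ℝ => x + s • e) :=
    continuous_const.add (continuous_id.smul continuous_const)
  have hderiv : ∀ s ∈ Set.uIcc (0:ℝ) t,
      HasDerivAt (fun s : ℝ => g (x + s • e)) (pderivAlong i g (x + s • e)) s := by
    intro s hs
    exact hasDerivAt_line g x e s
      (((hg.differentiableOn (by simp)).differentiableAt (hU.mem_nhds (hseg s hs))))
  have hint : IntervalIntegrable (fun s : ℝ => pderivAlong i g (x + s • e)) MeasureTheory.volume 0 t := by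
    apply ContinuousOn.intervalIntegrable
    exact (contOn_pderivAlong hU hg i).comp hline.continuousOn (fun s hs => hseg s hs)
  have := intervalIntegral.integral_eq_sub_of_hasDerivAt hderiv hint
  rw [this]
  simp


/-- From `L^∞` expansions of all partial derivatives to a `C^∞` expansion:
if `K` is compact convex with nonempty interior, `a_h` smooth on a neighborhood `U` of `K`,
and for every multi-index `β` (encoded as a list `l` of coordinate directions) there are
`h`-independent smooth coefficients `a_{β,j}` with
`sup_K |∂^β a_h − Σ_{j<N} h^j a_{β,j}| ≤ C h^N`, then `a_{β,j} = ∂^β a_{∅,j}` on `K`;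
consequently `a_h ∼ Σ h^j a_{∅,j}` is a classical expansion in `C^∞(K)`. -/
theorem stmt_15 (d' : ℕ) (hd' : 1 ≤ d')
    (K U : Set (EuclideanSpace ℝ (Fin d')))
    (hK : IsCompact K) (hKconv : Convex ℝ K) (hKint : (interior K).Nonempty)
    (hU : IsOpen U) (hKU : K ⊆ U)
    (a : ℝ → EuclideanSpace ℝ (Fin d') → ℝ)
    (ha : ∀ h ∈ Set.Ioc (0 : ℝ) 1, ContDiffOn ℝ (⊤ : ℕ∞) (a h) U)
    (ac : List (Fin d') → ℕ → EuclideanSpace ℝ (Fin d') → ℝ)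
    (hac : ∀ l j, ContDiffOn ℝ (⊤ : ℕ∞) (ac l j) U)
    (hexp : ∀ l : List (Fin d'), ∀ N : ℕ, ∃ C > 0, ∀ h ∈ Set.Ioc (0 : ℝ) 1, ∀ x ∈ K,
      |pderivList l (a h) x - ∑ j ∈ Finset.range N, h ^ j * ac l j x| ≤ C * h ^ N) :
    (∀ l j, Set.EqOn (ac l j) (pderivList l (ac [] j)) K) ∧
    (∀ l : List (Fin d'), ∀ N : ℕ, ∃ C > 0, ∀ h ∈ Set.Ioc (0 : ℝ) 1, ∀ x ∈ K,
      |pderivList l (a h) x -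
          ∑ j ∈ Finset.range N, h ^ j * pderivList l (ac [] j) x| ≤ C * h ^ N) := by
  have hneIoc : (nhdsWithin (0:ℝ) (Set.Ioc 0 1)).NeBot := by
    apply mem_closure_iff_nhdsWithin_neBot.1
    rw [closure_Ioc (by norm_num : (0:ℝ) ≠ 1)]
    exact ⟨le_refl 0, by norm_num⟩
  -- Key integral identity for the coefficients
  have key : ∀ (i : Fin d') (l : List (Fin d')) (j : ℕ) (x : EuclideanSpace ℝ (Fin d')) (t : ℝ),
      (∀ s ∈ Set.uIcc (0:ℝ) t,
        x + s • (EuclideanSpace.single i 1 : EuclideanSpace ℝ (Fin d')) ∈ K) →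
      ac l j (x + t • (EuclideanSpace.single i 1 : EuclideanSpace ℝ (Fin d'))) - ac l j x
        = ∫ s in (0:ℝ)..t,
            ac (i::l) j (x + s • (EuclideanSpace.single i 1 : EuclideanSpace ℝ (Fin d'))) := by
    intro i l j x t hseg
    set e : EuclideanSpace ℝ (Fin d') := EuclideanSpace.single i 1 with he
    have hline : Continuous (fun s : ℝ => x + s • e) :=
      continuous_const.add (continuous_id.smul continuous_const)
    have hsegU : ∀ s ∈ Set.uIcc (0:ℝ) t, x + s • e ∈ U := fun s hs => hKU (hseg s hs)
    have hcomp : ∀ f : EuclideanSpace ℝ (Fin d') → ℝ, ContinuousOn f U →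
        ContinuousOn (fun s : ℝ => f (x + s • e)) (Set.uIcc 0 t) :=
      fun f hf => hf.comp hline.continuousOn hsegU
    have hcompInt : ∀ f : EuclideanSpace ℝ (Fin d') → ℝ, ContinuousOn f U →
        IntervalIntegrable (fun s : ℝ => f (x + s • e)) MeasureTheory.volume 0 t :=
      fun f hf => (hcomp f hf).intervalIntegrable
    have hxK : x ∈ K := by simpa using hseg 0 Set.left_mem_uIcc
    have hyK : x + t • e ∈ K := hseg t Set.right_mem_uIcc
    have hz : ∀ jj, (fun jj => ac l jj (x + t • e) - ac l jj x
        - ∫ s in (0:ℝ)..t, ac (i::l) jj (x + s • e)) jj = 0 := by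
      apply coeff_zero
      intro N
      obtain ⟨C1, hC1pos, hC1⟩ := hexp l N
      obtain ⟨C2, hC2pos, hC2⟩ := hexp (i::l) N
      refine ⟨2 * C1 + C2 * |t|, ?_⟩
      intro h hh
      have hPh : ContDiffOn ℝ (⊤ : ℕ∞) (pderivList l (a h)) U :=
        contDiffOn_pderivList hU (ha h hh) l
      have hFTC : ∫ s in (0:ℝ)..t, pderivList (i::l) (a h) (x + s • e)
          = pderivList l (a h) (x + t • e) - pderivList l (a h) x :=
        lineFTC hU hPh i x t hsegU
      have hLin : ∫ s in (0:ℝ)..t, (∑ j ∈ Finset.range N, h ^ j * ac (i::l) j (x + s • e))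
          = ∑ j ∈ Finset.range N, h ^ j * ∫ s in (0:ℝ)..t, ac (i::l) j (x + s • e) := by
        rw [intervalIntegral.integral_finset_sum]
        · exact Finset.sum_congr rfl fun j _ => intervalIntegral.integral_const_mul _ _
        · intro j _
          exact (hcompInt _ (hac (i::l) j).continuousOn).const_mul _
      have hint1 : IntervalIntegrable (fun s => pderivList (i::l) (a h) (x + s • e))
          MeasureTheory.volume 0 t :=
        hcompInt _ (contDiffOn_pderivList hU (ha h hh) (i::l)).continuousOn
      have hint2 : IntervalIntegrable
          (fun s => ∑ j ∈ Finset.range N, h ^ j * ac (i::l) j (x + s • e))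
          MeasureTheory.volume 0 t := by
        apply ContinuousOn.intervalIntegrable
        apply continuousOn_finset_sum
        intro j _
        exact continuousOn_const.mul (hcomp _ (hac (i::l) j).continuousOn)
      have hId : ∑ j ∈ Finset.range N, h ^ j * (ac l j (x + t • e) - ac l j x
            - ∫ s in (0:ℝ)..t, ac (i::l) j (x + s • e))
          = -(pderivList l (a h) (x + t • e) - ∑ j ∈ Finset.range N, h ^ j * ac l j (x + t • e))
            + (pderivList l (a h) x - ∑ j ∈ Finset.range N, h ^ j * ac l j x)
            + ∫ s in (0:ℝ)..t, (pderivList (i::l) (a h) (x + s • e)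
                - ∑ j ∈ Finset.range N, h ^ j * ac (i::l) j (x + s • e)) := by
        rw [intervalIntegral.integral_sub hint1 hint2, hFTC, hLin]
        simp only [mul_sub, Finset.sum_sub_distrib]
        ring
      have b1 := hC1 h hh _ hyK
      have b2 := hC1 h hh _ hxK
      have b3 : |∫ s in (0:ℝ)..t, (pderivList (i::l) (a h) (x + s • e)
          - ∑ j ∈ Finset.range N, h ^ j * ac (i::l) j (x + s • e))| ≤ C2 * h ^ N * |t| := by
        have hb := intervalIntegral.norm_integral_le_of_norm_le_const
          (C := C2 * h ^ N) (a := (0:ℝ)) (b := t)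
          (f := fun s => pderivList (i::l) (a h) (x + s • e)
            - ∑ j ∈ Finset.range N, h ^ j * ac (i::l) j (x + s • e)) ?_
        · simpa [Real.norm_eq_abs] using hb
        · intro s hs
          have hsK : x + s • e ∈ K := hseg s (Set.uIoc_subset_uIcc hs)
          simpa [Real.norm_eq_abs] using hC2 h hh _ hsK
      rw [hId]
      have habs : |-(pderivList l (a h) (x + t • e)
            - ∑ j ∈ Finset.range N, h ^ j * ac l j (x + t • e))
          + (pderivList l (a h) x - ∑ j ∈ Finset.range N, h ^ j * ac l j x)
          + ∫ s in (0:ℝ)..t, (pderivList (i::l) (a h) (x + s • e)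
              - ∑ j ∈ Finset.range N, h ^ j * ac (i::l) j (x + s • e))|
          ≤ C1 * h ^ N + C1 * h ^ N + C2 * h ^ N * |t| := by
        refine (abs_add_le _ _).trans (add_le_add ((abs_add_le _ _).trans (add_le_add ?_ b2)) b3)
        rw [abs_neg]; exact b1
      refine habs.trans (le_of_eq ?_)
      ring
    have h0 := hz j
    simp only at h0
    linarith
  -- interior identity
  have intEq : ∀ (i : Fin d') (l : List (Fin d')) (j : ℕ), ∀ x ∈ interior K,
      ac (i::l) j x = pderivAlong i (ac l j) x := by
    intro i l j x hx
    set e : EuclideanSpace ℝ (Fin d') := EuclideanSpace.single i 1 with he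
    obtain ⟨ε, hε, hball⟩ := Metric.isOpen_iff.1 isOpen_interior x hx
    have hxK : x ∈ K := interior_subset hx
    have hxU : x ∈ U := hKU hxK
    have hnorm_e : ‖e‖ = 1 := by simp [he]
    have hmem : ∀ t : ℝ, |t| < ε → x + t • e ∈ K := by
      intro t ht
      apply interior_subset (hball ?_)
      rw [Metric.mem_ball, dist_eq_norm, add_sub_cancel_left, norm_smul, hnorm_e, mul_one]
      simpa [Real.norm_eq_abs] using ht
    have hmemU : ∀ t : ℝ, |t| < ε → x + t • e ∈ U := fun t ht => hKU (hmem t ht)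
    have hEq : ∀ t : ℝ, |t| < ε →
        ac l j (x + t • e) - ac l j x = ∫ s in (0:ℝ)..t, ac (i::l) j (x + s • e) := by
      intro t ht
      apply key
      intro s hs
      apply hmem
      have : |s| ≤ |t| := by
        rcases Set.mem_uIcc.mp hs with ⟨h1, h2⟩ | ⟨h1, h2⟩ <;> cases abs_cases t <;>
          rw [abs_le] <;> constructor <;> linarith
      linarith
    set f0 : ℝ → ℝ := fun s => ac (i::l) j (x + s • e) with hf0
    have hline : Continuous (fun s : ℝ => x + s • e) :=
      continuous_const.add (continuous_id.smul continuous_const)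
    have hcont0 : ContinuousOn f0 (Metric.ball (0:ℝ) ε) := by
      apply ((hac (i::l) j).continuousOn).comp hline.continuousOn
      intro s hs
      exact hmemU s (by simpa [Real.norm_eq_abs] using mem_ball_zero_iff.1 hs)
    have h0ball : (0:ℝ) ∈ Metric.ball (0:ℝ) ε := Metric.mem_ball_self hε
    have hint00 : IntervalIntegrable f0 MeasureTheory.volume 0 0 := by
      apply ContinuousOn.intervalIntegrable
      apply hcont0.mono
      rw [Set.uIcc_self]
      exact Set.singleton_subset_iff.2 h0ball
    have hmeas : StronglyMeasurableAtFilter f0 (nhds 0) MeasureTheory.volume :=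
      ContinuousOn.stronglyMeasurableAtFilter Metric.isOpen_ball hcont0 0 h0ball
    have hca : ContinuousAt f0 0 := hcont0.continuousAt (Metric.isOpen_ball.mem_nhds h0ball)
    have hD2 : HasDerivAt (fun t => ∫ s in (0:ℝ)..t, f0 s) (f0 0) 0 :=
      intervalIntegral.integral_hasDerivAt_right hint00 hmeas hca
    have hEv : (fun t => ac l j (x + t • e) - ac l j x)
        =ᶠ[nhds (0:ℝ)] (fun t => ∫ s in (0:ℝ)..t, f0 s) := by
      apply Filter.eventuallyEq_of_mem (Metric.ball_mem_nhds (0:ℝ) hε)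
      intro t ht
      exact hEq t (by simpa [Real.norm_eq_abs] using mem_ball_zero_iff.1 ht)
    have hD2' : HasDerivAt (fun t : ℝ => ac l j (x + t • e) - ac l j x) (f0 0) 0 :=
      hD2.congr_of_eventuallyEq hEv
    have hdiff : DifferentiableAt ℝ (ac l j) (x + (0:ℝ) • e) := by
      rw [zero_smul, add_zero]
      exact ((hac l j).differentiableOn (by simp)).differentiableAt (hU.mem_nhds hxU)
    have hD1 : HasDerivAt (fun t : ℝ => ac l j (x + t • e) - ac l j x)
        (fderiv ℝ (ac l j) x e) 0 := by
      have := (hasDerivAt_line (ac l j) x e 0 hdiff).sub_const (ac l j x)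
      simpa using this
    have huniq := hD1.unique hD2'
    have hf00 : f0 0 = ac (i::l) j x := by simp [hf0]
    rw [hf00] at huniq
    exact huniq.symm ▸ rfl
  -- extension from interior to K by continuity
  have hdense : ∀ x ∈ K, x ∈ closure (interior K) := by
    intro x hx
    obtain ⟨y, hy⟩ := hKint
    have htend : Filter.Tendsto (fun t : ℝ => x + t • (y - x))
        (nhdsWithin 0 (Set.Ioc 0 1)) (nhds x) := by
      have hc : Continuous (fun t : ℝ => x + t • (y - x)) :=
        continuous_const.add (continuous_id.smul continuous_const)
      have := hc.tendsto 0
      simp only [zero_smul, add_zero] at this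
      exact this.mono_left nhdsWithin_le_nhds
    refine mem_closure_of_tendsto htend ?_
    apply eventually_nhdsWithin_of_forall
    intro t ht
    exact (hKconv.add_smul_sub_mem_interior hx hy ht)
  have extend : ∀ f g : EuclideanSpace ℝ (Fin d') → ℝ, ContinuousOn f U → ContinuousOn g U →
      Set.EqOn f g (interior K) → Set.EqOn f g K := by
    intro f g hf hg heq x hx
    have hne : (nhdsWithin x (interior K)).NeBot :=
      mem_closure_iff_nhdsWithin_neBot.1 (hdense x hx)
    have hfx : Filter.Tendsto f (nhdsWithin x (interior K)) (nhds (f x)) :=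
      ((hf.continuousAt (hU.mem_nhds (hKU hx))).tendsto).mono_left nhdsWithin_le_nhds
    have hgx : Filter.Tendsto g (nhdsWithin x (interior K)) (nhds (g x)) :=
      ((hg.continuousAt (hU.mem_nhds (hKU hx))).tendsto).mono_left nhdsWithin_le_nhds
    have hEv : f =ᶠ[nhdsWithin x (interior K)] g :=
      eventually_nhdsWithin_of_forall fun y hy => heq hy
    exact tendsto_nhds_unique (hfx.congr' hEv) hgx
  have part1 : ∀ l j, Set.EqOn (ac l j) (pderivList l (ac [] j)) K := by
    intro l
    induction l with
    | nil => intro j x hx; rfl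
    | cons i l ih =>
      intro j
      apply extend _ _ ((hac _ j).continuousOn)
        ((contDiffOn_pderivList hU (hac [] j) (i::l)).continuousOn)
      intro x hx
      have h1 := intEq i l j x hx
      have h2 : fderiv ℝ (ac l j) x = fderiv ℝ (pderivList l (ac [] j)) x := by
        apply Filter.EventuallyEq.fderiv_eq
        exact Filter.eventuallyEq_of_mem (isOpen_interior.mem_nhds hx)
          fun y hy => ih j (interior_subset hy)
      show ac (i::l) j x = pderivAlong i (pderivList l (ac [] j)) x
      rw [h1]
      unfold pderivAlong
      rw [h2]
  refine ⟨part1, ?_⟩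
  intro l N
  obtain ⟨C, hCpos, hC⟩ := hexp l N
  refine ⟨C, hCpos, fun h hh x hx => ?_⟩
  have hs : ∑ j ∈ Finset.range N, h ^ j * pderivList l (ac [] j) x
      = ∑ j ∈ Finset.range N, h ^ j * ac l j x :=
    Finset.sum_congr rfl fun j _ => by rw [part1 l j hx]
  rw [hs]
  exact hC h hh x hx
end

section
/- Contour-integral representation on a vertical line: let c > 0, β > 0, C' > 0, and let f be a holomorphic function on the half-plane {z ∈ ℂ : Re z > −c} satisfying |f(z)| ≤ C' (1+|z|²)^{−β/2} there. Then for every z₀ ∈ ℂ with Re z₀ > −c/2, the integral below converges absolutely and f(z₀) = (1/(2π)) ∫_{−∞}^{∞} f(−c/2 + it) (z₀ + c/2 − it)^{−1} dt. -/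
/-!
Cauchy's integral formula on the rectangle `[-c/2, T] × [-T, T]`, followed by `T → ∞`.
Splitting `f ζ / (ζ - z₀) = dslope f z₀ ζ + f z₀ / (ζ - z₀)`, the first term integrates to zero
around the rectangle and the second to `2πi f(z₀)`, computed with branches of `log`. On the three
far sides `‖ζ‖ ≥ T` and `‖ζ - z₀‖ ≥ T / 2`, so their contribution is `O(sup_{‖ζ‖ ≥ T} ‖f ζ‖)`,
which tends to zero. The left side tends to the line integral, which converges absolutely because
its integrand is `O((1 + t²)^(-(β + 1)/2))`.
-/

open MeasureTheory Complex Set Filter intervalIntegral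
open scoped Interval Topology

theorem Complex.log_neg_sub_log_of_im_neg {w : ℂ} (hw : w.im < 0) :
    log (-w) - log w = Real.pi * I := by
  rw [log, log, norm_neg, arg_neg_eq_arg_add_pi_of_im_neg hw]
  push_cast
  ring

theorem Complex.ofReal_add_mul_I_mem_reProdIm {s t : Set ℝ} {x y : ℝ} :
    (x + y * I : ℂ) ∈ s ×ℂ t ↔ x ∈ s ∧ y ∈ t := by
  simp [mem_reProdIm]

theorem integral_mul_inv_affine_eq_log_sub (p v u : ℂ) {a b : ℝ}
    (h : ∀ x ∈ [[a, b]], u * (p + x * v) ∈ slitPlane) :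
    ∫ x in a..b, v * (p + x * v)⁻¹ = log (u * (p + b * v)) - log (u * (p + a * v)) := by
  have hne : ∀ x ∈ [[a, b]], u * (p + x * v) ≠ 0 := fun x hx => slitPlane_ne_zero (h x hx)
  refine integral_eq_sub_of_hasDerivAt (f := fun x : ℝ => log (u * (p + x * v)))
    (fun x hx => ?_) (ContinuousOn.intervalIntegrable ?_)
  · have hlin : HasDerivAt (fun y : ℂ => u * (p + y * v)) (u * v) x := by
      simpa using ((hasDerivAt_id (x : ℂ)).mul_const v |>.const_add p |>.const_mul u)
    have hderiv : (u * (p + x * v))⁻¹ * (u * v) = v * (p + x * v)⁻¹ := by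
      field_simp [left_ne_zero_of_mul (hne x hx), right_ne_zero_of_mul (hne x hx)]
    have hd := ((hasDerivAt_log (h x hx)).comp (x : ℂ) hlin).comp_ofReal
    rw [hderiv] at hd
    exact hd
  · exact continuousOn_const.mul <| ContinuousOn.inv₀ (by fun_prop)
      fun x hx => right_ne_zero_of_mul (hne x hx)

/-- The integral of `f` over the boundary of the rectangle with opposite corners `z` and `w`,
counterclockwise when `z.re ≤ w.re` and `z.im ≤ w.im`; this is the expression of
`Complex.integral_boundary_rect_eq_zero_of_differentiableOn`. -/
noncomputable def rectIntegral (f : ℂ → ℂ) (z w : ℂ) : ℂ :=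
  (∫ x : ℝ in z.re..w.re, f (x + z.im * I)) - (∫ x : ℝ in z.re..w.re, f (x + w.im * I))
    + I * (∫ y : ℝ in z.im..w.im, f (w.re + y * I)) - I * ∫ y : ℝ in z.im..w.im, f (z.re + y * I)

namespace rectIntegral

variable {f g : ℂ → ℂ} {z w p : ℂ}

theorem eq_zero_of_differentiableOn
    (hf : DifferentiableOn ℂ f ([[z.re, w.re]] ×ℂ [[z.im, w.im]])) :
    rectIntegral f z w = 0 := by
  simpa [rectIntegral, smul_eq_mul] using
    integral_boundary_rect_eq_zero_of_differentiableOn f z w hf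

theorem const_mul (c : ℂ) :
    rectIntegral (fun ζ => c * f ζ) z w = c * rectIntegral f z w := by
  simp only [rectIntegral, intervalIntegral.integral_const_mul]
  ring

theorem ofReal_add_mul_I_mem_diff {x y : ℝ} (hx : x ∈ [[z.re, w.re]]) (hy : y ∈ [[z.im, w.im]])
    (hne : x ≠ p.re ∨ y ≠ p.im) :
    (x + y * I : ℂ) ∈ ([[z.re, w.re]] ×ℂ [[z.im, w.im]]) \ {p} := by
  refine ⟨ofReal_add_mul_I_mem_reProdIm.2 ⟨hx, hy⟩, fun h => ?_⟩
  rcases hne with hne | hne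
  · exact hne (by simpa using congrArg re h)
  · exact hne (by simpa using congrArg im h)

theorem intervalIntegrable_horizontal
    (hf : ContinuousOn f (([[z.re, w.re]] ×ℂ [[z.im, w.im]]) \ {p}))
    {y : ℝ} (hy : y ∈ [[z.im, w.im]]) (hyp : y ≠ p.im) :
    IntervalIntegrable (fun x : ℝ => f (x + y * I)) volume z.re w.re :=
  (hf.comp (by fun_prop) fun _ hx => ofReal_add_mul_I_mem_diff hx hy (.inr hyp)).intervalIntegrable

theorem intervalIntegrable_vertical
    (hf : ContinuousOn f (([[z.re, w.re]] ×ℂ [[z.im, w.im]]) \ {p}))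
    {x : ℝ} (hx : x ∈ [[z.re, w.re]]) (hxp : x ≠ p.re) :
    IntervalIntegrable (fun y : ℝ => f (x + y * I)) volume z.im w.im :=
  (hf.comp (by fun_prop) fun _ hy => ofReal_add_mul_I_mem_diff hx hy (.inl hxp)).intervalIntegrable

theorem add (hp : p ∈ Ioo z.re w.re ×ℂ Ioo z.im w.im)
    (hf : ContinuousOn f (([[z.re, w.re]] ×ℂ [[z.im, w.im]]) \ {p}))
    (hg : ContinuousOn g (([[z.re, w.re]] ×ℂ [[z.im, w.im]]) \ {p})) :
    rectIntegral (fun ζ => f ζ + g ζ) z w = rectIntegral f z w + rectIntegral g z w := by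
  obtain ⟨⟨hre₁, hre₂⟩, him₁, him₂⟩ := hp
  simp only [rectIntegral]
  rw [integral_add (intervalIntegrable_horizontal hf left_mem_uIcc him₁.ne)
      (intervalIntegrable_horizontal hg left_mem_uIcc him₁.ne),
    integral_add (intervalIntegrable_horizontal hf right_mem_uIcc him₂.ne')
      (intervalIntegrable_horizontal hg right_mem_uIcc him₂.ne'),
    integral_add (intervalIntegrable_vertical hf right_mem_uIcc hre₂.ne')
      (intervalIntegrable_vertical hg right_mem_uIcc hre₂.ne'),
    integral_add (intervalIntegrable_vertical hf left_mem_uIcc hre₁.ne)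
      (intervalIntegrable_vertical hg left_mem_uIcc hre₁.ne)]
  ring

theorem congr (hp : p ∈ Ioo z.re w.re ×ℂ Ioo z.im w.im)
    (h : EqOn f g (([[z.re, w.re]] ×ℂ [[z.im, w.im]]) \ {p})) :
    rectIntegral f z w = rectIntegral g z w := by
  obtain ⟨⟨hre₁, hre₂⟩, him₁, him₂⟩ := hp
  simp only [rectIntegral]
  rw [integral_congr fun x hx => h (ofReal_add_mul_I_mem_diff hx left_mem_uIcc (.inr him₁.ne)),
    integral_congr fun x hx => h (ofReal_add_mul_I_mem_diff hx right_mem_uIcc (.inr him₂.ne')),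
    integral_congr fun y hy => h (ofReal_add_mul_I_mem_diff right_mem_uIcc hy (.inl hre₂.ne')),
    integral_congr fun y hy => h (ofReal_add_mul_I_mem_diff left_mem_uIcc hy (.inl hre₁.ne))]

/- `log (ζ - p)` is a primitive of `(ζ - p)⁻¹` along the bottom, top and right sides, and
`log (p - ζ)` along the left side; the two branches differ by `πi` at each left corner. -/
theorem inv_sub_eq (hp : p ∈ Ioo z.re w.re ×ℂ Ioo z.im w.im) :
    rectIntegral (fun ζ => (ζ - p)⁻¹) z w = 2 * Real.pi * I := by
  obtain ⟨⟨hre₁, hre₂⟩, him₁, him₂⟩ := hp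
  have bottom : ∫ x : ℝ in z.re..w.re, ((x : ℂ) + z.im * I - p)⁻¹
      = log (w.re + z.im * I - p) - log (z.re + z.im * I - p) := by
    convert integral_mul_inv_affine_eq_log_sub (z.im * I - p) 1 1 fun x _ => ?_ using 1
    · simp only [one_mul, mul_one]; congr 1; ext x; ring_nf
    · ring_nf
    · simp [mem_slitPlane_iff, sub_eq_zero, him₁.ne]
  have top : ∫ x : ℝ in z.re..w.re, ((x : ℂ) + w.im * I - p)⁻¹
      = log (w.re + w.im * I - p) - log (z.re + w.im * I - p) := by
    convert integral_mul_inv_affine_eq_log_sub (w.im * I - p) 1 1 fun x _ => ?_ using 1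
    · simp only [one_mul, mul_one]; congr 1; ext x; ring_nf
    · ring_nf
    · simp [mem_slitPlane_iff, sub_eq_zero, him₂.ne']
  have right : I * ∫ y : ℝ in z.im..w.im, ((w.re : ℂ) + y * I - p)⁻¹
      = log (w.re + w.im * I - p) - log (w.re + z.im * I - p) := by
    rw [← intervalIntegral.integral_const_mul]
    convert integral_mul_inv_affine_eq_log_sub (w.re - p) I 1 fun y _ => ?_ using 1
    · congr 1; ext y; ring_nf
    · ring_nf
    · simp [mem_slitPlane_iff, hre₂]
  have left : I * ∫ y : ℝ in z.im..w.im, ((z.re : ℂ) + y * I - p)⁻¹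
      = log (-(z.re + w.im * I - p)) - log (-(z.re + z.im * I - p)) := by
    rw [← intervalIntegral.integral_const_mul]
    convert integral_mul_inv_affine_eq_log_sub (z.re - p) I (-1) fun y _ => ?_ using 1
    · congr 1; ext y; ring_nf
    · ring_nf
    · simp [mem_slitPlane_iff, hre₁]
  have corner_bottom := log_neg_sub_log_of_im_neg (w := z.re + z.im * I - p) (by simpa using him₁)
  have corner_top := log_neg_sub_log_of_im_neg (w := -(z.re + w.im * I - p)) (by simpa using him₂)
  rw [neg_neg] at corner_top
  simp only [rectIntegral]
  rw [bottom, top, right, left]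
  linear_combination corner_bottom + corner_top

theorem mul_inv_sub_eq (hp : p ∈ Ioo z.re w.re ×ℂ Ioo z.im w.im)
    (hf : DifferentiableOn ℂ f ([[z.re, w.re]] ×ℂ [[z.im, w.im]])) :
    rectIntegral (fun ζ => f ζ * (ζ - p)⁻¹) z w = 2 * Real.pi * I * f p := by
  have hnhds : [[z.re, w.re]] ×ℂ [[z.im, w.im]] ∈ 𝓝 p :=
    mem_of_superset ((isOpen_Ioo.reProdIm isOpen_Ioo).mem_nhds hp)
      (inter_subset_inter (preimage_mono (Ioo_subset_Icc_self.trans Icc_subset_uIcc))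
        (preimage_mono (Ioo_subset_Icc_self.trans Icc_subset_uIcc)))
  have hdslope : DifferentiableOn ℂ (dslope f p) ([[z.re, w.re]] ×ℂ [[z.im, w.im]]) :=
    (differentiableOn_dslope hnhds).2 hf
  have hsplit : EqOn (fun ζ => f ζ * (ζ - p)⁻¹) (fun ζ => dslope f p ζ + f p * (ζ - p)⁻¹)
      (([[z.re, w.re]] ×ℂ [[z.im, w.im]]) \ {p}) := fun ζ hζ => by
    have hζp : ζ - p ≠ 0 := sub_ne_zero.2 hζ.2
    simp only [dslope_of_ne f hζ.2, slope_def_field]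
    field_simp
    ring
  have hinv : ContinuousOn (fun ζ => (ζ - p)⁻¹) (([[z.re, w.re]] ×ℂ [[z.im, w.im]]) \ {p}) :=
    ContinuousOn.inv₀ (by fun_prop) fun ζ hζ => sub_ne_zero.2 hζ.2
  rw [congr hp hsplit, add (g := fun ζ => f p * (ζ - p)⁻¹) hp
      (hdslope.continuousOn.mono sdiff_subset) (continuousOn_const.mul hinv),
    eq_zero_of_differentiableOn hdslope, const_mul, inv_sub_eq hp]
  ring

theorem norm_add_left_side_le {M : ℝ} (hre : z.re ≤ w.re) (him : z.im ≤ w.im)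
    (hM : ∀ ζ ∈ [[z.re, w.re]] ×ℂ [[z.im, w.im]], ζ.im = z.im ∨ ζ.im = w.im ∨ ζ.re = w.re →
      ‖f ζ‖ ≤ M) :
    ‖rectIntegral f z w + I * ∫ y : ℝ in z.im..w.im, f (z.re + y * I)‖
      ≤ M * (2 * (w.re - z.re) + (w.im - z.im)) := by
  have bottom : ‖∫ x : ℝ in z.re..w.re, f (x + z.im * I)‖ ≤ M * (w.re - z.re) := by
    refine (norm_integral_le_of_norm_le_const fun x hx => hM _ ?_ (by simp)).trans_eq
      (by rw [abs_of_nonneg (sub_nonneg.2 hre)])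
    exact ofReal_add_mul_I_mem_reProdIm.2 ⟨uIoc_subset_uIcc hx, left_mem_uIcc⟩
  have top : ‖∫ x : ℝ in z.re..w.re, f (x + w.im * I)‖ ≤ M * (w.re - z.re) := by
    refine (norm_integral_le_of_norm_le_const fun x hx => hM _ ?_ (by simp)).trans_eq
      (by rw [abs_of_nonneg (sub_nonneg.2 hre)])
    exact ofReal_add_mul_I_mem_reProdIm.2 ⟨uIoc_subset_uIcc hx, right_mem_uIcc⟩
  have right : ‖∫ y : ℝ in z.im..w.im, f (w.re + y * I)‖ ≤ M * (w.im - z.im) := by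
    refine (norm_integral_le_of_norm_le_const fun y hy => hM _ ?_ (by simp)).trans_eq
      (by rw [abs_of_nonneg (sub_nonneg.2 him)])
    exact ofReal_add_mul_I_mem_reProdIm.2 ⟨right_mem_uIcc, uIoc_subset_uIcc hy⟩
  calc ‖rectIntegral f z w + I * ∫ y : ℝ in z.im..w.im, f (z.re + y * I)‖
      = ‖(∫ x : ℝ in z.re..w.re, f (x + z.im * I)) - (∫ x : ℝ in z.re..w.re, f (x + w.im * I))
          + I * ∫ y : ℝ in z.im..w.im, f (w.re + y * I)‖ := by
        simp only [rectIntegral, sub_add_cancel]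
    _ ≤ M * (w.re - z.re) + M * (w.re - z.re) + M * (w.im - z.im) := by
      refine (norm_add_le _ _).trans
        (add_le_add ((norm_sub_le _ _).trans (add_le_add bottom top)) ?_)
      rwa [norm_mul, norm_I, one_mul]
    _ = M * (2 * (w.re - z.re) + (w.im - z.im)) := by ring

end rectIntegral

theorem norm_mul_inv_sub_le {a ζ z₀ : ℂ} {ε T : ℝ} (ha : ‖a‖ ≤ ε) (hζ : T ≤ ‖ζ‖)
    (hz₀ : 2 * ‖z₀‖ < T) :
    ‖a * (ζ - z₀)⁻¹‖ ≤ ε * (T / 2)⁻¹ := by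
  have hdist : T / 2 ≤ ‖ζ - z₀‖ := by linarith [norm_sub_norm_le ζ z₀]
  rw [norm_mul, norm_inv]
  exact mul_le_mul ha (inv_anti₀ (by linarith [norm_nonneg z₀]) hdist) (by positivity)
    ((norm_nonneg a).trans ha)

section VerticalLine

variable {f : ℂ → ℂ} {σ : ℝ} {z₀ : ℂ}

theorem norm_integral_vertical_sub_le (hf : DifferentiableOn ℂ f {z | σ ≤ z.re})
    (hz₀ : σ < z₀.re) {ε R T : ℝ} (hε₀ : 0 ≤ ε) (hε : ∀ ζ, σ ≤ ζ.re → R ≤ ‖ζ‖ → ‖f ζ‖ ≤ ε)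
    (hRT : R ≤ T) (hz₀T : 2 * ‖z₀‖ < T) (hσT : |σ| ≤ T) :
    ‖(∫ t : ℝ in -T..T, f (σ + t * I) * (z₀ - σ - t * I)⁻¹) - 2 * Real.pi * f z₀‖ ≤ 12 * ε := by
  have hT : 0 < T := (by positivity : 0 ≤ 2 * ‖z₀‖).trans_lt hz₀T
  have hre : z₀.re < T := (re_le_norm z₀).trans_lt (by linarith [norm_nonneg z₀])
  have him : -T < z₀.im ∧ z₀.im < T :=
    abs_lt.1 ((abs_im_le_norm z₀).trans_lt (by linarith [norm_nonneg z₀]))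
  let z : ℂ := ⟨σ, -T⟩
  let w : ℂ := ⟨T, T⟩
  have hp : z₀ ∈ Ioo z.re w.re ×ℂ Ioo z.im w.im := ⟨⟨hz₀, hre⟩, him⟩
  have hsub : [[z.re, w.re]] ×ℂ [[z.im, w.im]] ⊆ {z | σ ≤ z.re} := fun ζ hζ => by
    have hζre := (mem_reProdIm.1 hζ).1
    rw [uIcc_of_le (hz₀.trans hre).le] at hζre
    exact hζre.1
  have hfar : ∀ ζ ∈ [[z.re, w.re]] ×ℂ [[z.im, w.im]], ζ.im = z.im ∨ ζ.im = w.im ∨ ζ.re = w.re →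
      ‖f ζ * (ζ - z₀)⁻¹‖ ≤ ε * (T / 2)⁻¹ := by
    intro ζ hζ hside
    have hζT : T ≤ ‖ζ‖ := by
      rcases hside with h | h | h
      · simpa [h, z, abs_of_pos hT] using abs_im_le_norm ζ
      · simpa [h, w, abs_of_pos hT] using abs_im_le_norm ζ
      · simpa [h, w, abs_of_pos hT] using abs_re_le_norm ζ
    exact norm_mul_inv_sub_le (hε ζ (hsub hζ) (hRT.trans hζT)) hζT hz₀T
  have hcauchy := rectIntegral.mul_inv_sub_eq hp (hf.mono hsub)
  have hsides := rectIntegral.norm_add_left_side_le (show σ ≤ T by linarith)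
    (show -T ≤ T by linarith) hfar
  have hleft : ∫ y : ℝ in z.im..w.im, f (z.re + y * I) * (z.re + y * I - z₀)⁻¹
      = -∫ t : ℝ in -T..T, f (σ + t * I) * (z₀ - σ - t * I)⁻¹ := by
    rw [← intervalIntegral.integral_neg]
    refine integral_congr fun y _ => ?_
    simp only [z, show (σ : ℂ) + y * I - z₀ = -(z₀ - σ - y * I) by ring, inv_neg, mul_neg]
  have hlength : (T / 2)⁻¹ * (2 * (w.re - z.re) + (w.im - z.im)) ≤ 12 := by
    rw [inv_div, div_mul_eq_mul_div, div_le_iff₀ hT]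
    simp only [z, w]
    linarith [neg_abs_le σ]
  calc ‖(∫ t : ℝ in -T..T, f (σ + t * I) * (z₀ - σ - t * I)⁻¹) - 2 * Real.pi * f z₀‖
      = ‖rectIntegral (fun ζ => f ζ * (ζ - z₀)⁻¹) z w
          + I * ∫ y : ℝ in z.im..w.im, f (z.re + y * I) * (z.re + y * I - z₀)⁻¹‖ := by
        rw [hcauchy, hleft, ← norm_neg, ← one_mul ‖_‖, ← norm_I, ← norm_mul]
        ring_nf
    _ ≤ ε * (T / 2)⁻¹ * (2 * (w.re - z.re) + (w.im - z.im)) := hsides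
    _ ≤ ε * 12 := by rw [mul_assoc]; exact mul_le_mul_of_nonneg_left hlength hε₀
    _ = 12 * ε := mul_comm _ _

theorem tendsto_integral_vertical (hf : DifferentiableOn ℂ f {z | σ ≤ z.re})
    (hf0 : Tendsto f (Bornology.cobounded ℂ ⊓ 𝓟 {z | σ ≤ z.re}) (𝓝 0)) (hz₀ : σ < z₀.re) :
    Tendsto (fun T : ℝ => ∫ t : ℝ in -T..T, f (σ + t * I) * (z₀ - σ - t * I)⁻¹) atTop
      (𝓝 (2 * Real.pi * f z₀)) := by
  rw [Metric.tendsto_atTop]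
  intro ε hε
  have hsmall := hf0.eventually (Metric.closedBall_mem_nhds 0 (by positivity : 0 < ε / 24))
  rw [← comap_norm_atTop, eventually_inf_principal, eventually_comap, eventually_atTop] at hsmall
  obtain ⟨R, hR⟩ := hsmall
  refine ⟨max R (max (2 * ‖z₀‖ + 1) |σ|), fun T hT => ?_⟩
  simp only [ge_iff_le, max_le_iff] at hT
  rw [dist_eq_norm]
  calc _ ≤ 12 * (ε / 24) := norm_integral_vertical_sub_le hf hz₀ (by positivity)
          (fun ζ hζ hRζ => by simpa using hR ‖ζ‖ hRζ ζ rfl hζ) hT.1 (by linarith) hT.2.2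
    _ < ε := by linarith

end VerticalLine

theorem tendsto_one_add_norm_sq_rpow_neg_cobounded {E : Type*} [NormedAddCommGroup E] {r : ℝ}
    (hr : 0 < r) :
    Tendsto (fun x : E => (1 + ‖x‖ ^ 2) ^ (-r / 2)) (Bornology.cobounded E) (𝓝 0) := by
  have h := (tendsto_rpow_neg_atTop (half_pos hr)).comp <| tendsto_atTop_add_const_left _ 1 <|
    (tendsto_pow_atTop two_ne_zero).comp (tendsto_norm_cobounded_atTop (E := E))
  simpa [Function.comp_def, neg_div] using h

theorem Complex.norm_inv_sub_mul_I_le {w : ℂ} (hw : 0 < w.re) (t : ℝ) :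
    ‖(w - t * I)⁻¹‖ ≤ (1 + w.re + ‖w‖) / w.re * (1 + ‖t‖ ^ 2) ^ (-1 / 2 : ℝ) := by
  set q := w - t * I
  have hq : w.re ≤ ‖q‖ := by simpa [q] using re_le_norm q
  have ht : ‖t‖ ≤ ‖w‖ + ‖q‖ := by
    have h := norm_sub_le w q
    rwa [show w - q = t * I by ring, norm_mul, norm_I, mul_one, norm_real] at h
  have hsqrt : √(1 + ‖t‖ ^ 2) ≤ ‖q‖ * ((1 + w.re + ‖w‖) / w.re) := by
    rw [mul_div_assoc', le_div_iff₀ hw]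
    nlinarith [sqrt_one_add_norm_sq_le t, norm_nonneg w, norm_nonneg t]
  rw [norm_inv, neg_div, Real.rpow_neg (by positivity), ← Real.sqrt_eq_rpow, ← div_eq_mul_inv,
    le_div_iff₀ (by positivity), inv_mul_le_iff₀ (hw.trans_le hq)]
  exact hsqrt

theorem integrable_mul_inv_sub_mul_I {g : ℝ → ℂ} {C β : ℝ} (hg : Continuous g) (hβ : 0 < β)
    (hbound : ∀ t, ‖g t‖ ≤ C * (1 + ‖t‖ ^ 2) ^ (-β / 2)) {w : ℂ} (hw : 0 < w.re) :
    Integrable (fun t : ℝ => g t * (w - t * I)⁻¹) := by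
  have hne : ∀ t : ℝ, w - t * I ≠ 0 := fun t h => hw.ne' (by simpa using congrArg re h)
  refine ((integrable_rpow_neg_one_add_norm_sq (r := β + 1) (by simpa using hβ)).const_mul
    (C * ((1 + w.re + ‖w‖) / w.re))).mono'
    (hg.mul ((by fun_prop : Continuous fun t : ℝ => w - t * I).inv₀ hne)).aestronglyMeasurable
    (ae_of_all _ fun t => ?_)
  calc ‖g t * (w - t * I)⁻¹‖ = ‖g t‖ * ‖(w - t * I)⁻¹‖ := norm_mul _ _
    _ ≤ C * (1 + ‖t‖ ^ 2) ^ (-β / 2) * ((1 + w.re + ‖w‖) / w.re * (1 + ‖t‖ ^ 2) ^ (-1 / 2 : ℝ)) :=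
      mul_le_mul (hbound t) (norm_inv_sub_mul_I_le hw t) (norm_nonneg _)
        ((norm_nonneg _).trans (hbound t))
    _ = C * ((1 + w.re + ‖w‖) / w.re) * (1 + ‖t‖ ^ 2) ^ (-(β + 1) / 2) := by
      rw [show -(β + 1) / 2 = -β / 2 + -1 / 2 by ring, Real.rpow_add (by positivity)]
      ring

/-- Contour-integral representation on a vertical line: if `f` is
holomorphic on `{Re z > -c}` with `|f(z)| ≤ C'(1+|z|²)^{-β/2}` there, then for every `z₀`
with `Re z₀ > -c/2`, the integral converges absolutely and
`f(z₀) = (1/2π) ∫_ℝ f(-c/2 + it) (z₀ + c/2 - it)⁻¹ dt`. -/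
theorem stmt_16 (c β C' : ℝ) (hc : 0 < c) (hβ : 0 < β) (hC' : 0 < C')
    (f : ℂ → ℂ) (hf : DifferentiableOn ℂ f {z : ℂ | -c < z.re})
    (hbound : ∀ z : ℂ, -c < z.re →
      ‖f z‖ ≤ C' * (1 + ‖z‖ ^ 2) ^ (-β / 2))
    (z₀ : ℂ) (hz₀ : -c / 2 < z₀.re) :
    Integrable (fun t : ℝ =>
        f (-(c : ℂ) / 2 + (t : ℂ) * Complex.I) *
          (z₀ + (c : ℂ) / 2 - (t : ℂ) * Complex.I)⁻¹) ∧
    f z₀ = (1 / (2 * (Real.pi : ℂ))) *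
      ∫ t : ℝ, f (-(c : ℂ) / 2 + (t : ℂ) * Complex.I) *
        (z₀ + (c : ℂ) / 2 - (t : ℂ) * Complex.I)⁻¹ := by
  have hhalf : {z : ℂ | -c / 2 ≤ z.re} ⊆ {z : ℂ | -c < z.re} := fun z (hz : -c / 2 ≤ z.re) =>
    show -c < z.re by linarith
  have hline : ∀ t : ℝ, -(c : ℂ) / 2 + t * I ∈ {z : ℂ | -c / 2 ≤ z.re} := fun t => by simp
  have hdecay : ∀ t : ℝ, ‖f (-(c : ℂ) / 2 + t * I)‖ ≤ C' * (1 + ‖t‖ ^ 2) ^ (-β / 2) := fun t =>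
    (hbound _ (hhalf (hline t))).trans <| mul_le_mul_of_nonneg_left
      (Real.rpow_le_rpow_of_nonpos (by positivity)
        (by gcongr; simpa using abs_im_le_norm (-(c : ℂ) / 2 + t * I)) (by linarith)) hC'.le
  have hint := integrable_mul_inv_sub_mul_I
    (g := fun t : ℝ => f (-(c : ℂ) / 2 + t * I))
    ((hf.mono hhalf).continuousOn.comp_continuous (by fun_prop) hline) hβ hdecay
    (w := z₀ + c / 2) (by simp only [add_re, div_ofNat_re, ofReal_re]; linarith)
  refine ⟨hint, ?_⟩
  have hf0 : Tendsto f (Bornology.cobounded ℂ ⊓ 𝓟 {z : ℂ | -c / 2 ≤ z.re}) (𝓝 0) :=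
    squeeze_zero_norm' (eventually_inf_principal.2 (.of_forall fun z hz => hbound z (hhalf hz)))
      (by simpa using
        ((tendsto_one_add_norm_sq_rpow_neg_cobounded hβ).const_mul C').mono_left inf_le_left)
  have hlim := tendsto_integral_vertical (hf.mono hhalf) hf0 (z₀ := z₀) (by simpa using hz₀)
  have hJ := intervalIntegral_tendsto_integral hint tendsto_neg_atTop_atBot tendsto_id
  have hvalue : ∫ t : ℝ, f (-(c : ℂ) / 2 + t * I) * (z₀ + c / 2 - t * I)⁻¹ = 2 * Real.pi * f z₀ :=
    tendsto_nhds_unique hJ (by convert hlim using 5 <;> push_cast <;> first | rfl | ring)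
  rw [hvalue]
  field_simp
end
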